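/- arXiv:1612.05641 — 6 statements merged into one kernel-verified Lean document; each statement's English description precedes it below -/
import Mathlib

section
/- In the formal power series ring A[[T]], if a, b, k, k′ ∈ A satisfy a·b − b·a = (q − q⁻¹)(k′ − k), k·a = q²·a·k, and a·k′ = q²·k′·a, then Ψ_q^{(1)}(a) · (b + k′·T) = (b + k·T) · Ψ_q^{(1)}(a); equivalently, conjugation by the invertible series Ψ_q^{(1)}(a) sends b + k′·T to b + k·T. (This is the paper's Lemma 11.1 on sl₂-triples: for an sl₂ triple (e, f, K, K′) with [e,f] = (q−q⁻¹)(K′−K), Ke = q²eK, K′e = q⁻²eK′ and any element X q-commuting appropriately, Ad_{g_b(e⊗X)}(f⊗1 + K′⊗X) = f⊗1 + K⊗X, with a = e⊗X, b = f⊗1, k = K⊗X, k′ = K′⊗X.) -/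
/-!
Write `Ψ_q⁽¹⁾(a) = Σ cₙ aⁿ Tⁿ`. Comparing coefficients of `Tⁿ⁺¹` reduces the claim to
`cₙ₊₁ [aⁿ⁺¹, b] = cₙ (k aⁿ - aⁿ k')`. The `q`-commutation relations give, by induction,
`[aⁿ⁺¹, b] = (q - q^{-(2n+1)}) (aⁿ k' - k aⁿ)`, while the ratio
`cₙ₊₁ / cₙ = q^{2n+1} / (1 - q^{2n+2})` gives `cₙ₊₁ (q - q^{-(2n+1)}) = -cₙ`.
-/

/-- The formal quantum dilogarithm series
`Ψ_p⁽ᵐ⁾(a) = Σ_{n≥0} (p^{n²} / ∏_{k=1}^{n}(1 − p^{2k})) aⁿ T^{mn}`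
in the formal power series ring `A[[T]]`. -/
noncomputable def Psi {K : Type*} [Field K] (A : Type*) [Ring A] [Algebra K A]
    (p : K) (m : ℕ) (a : A) : PowerSeries A :=
  PowerSeries.mk fun n =>
    if m ∣ n then
      (p ^ ((n / m) ^ 2) / ∏ k ∈ Finset.Icc 1 (n / m), (1 - p ^ (2 * k))) • a ^ (n / m)
    else 0

section Commutation

variable {K : Type*} [Field K] {A : Type*} [Ring A] [Algebra K A]

theorem mul_pow_eq_smul_pow_mul {u : K} {x a : A} (h : x * a = u • (a * x)) (n : ℕ) :
    x * a ^ n = u ^ n • (a ^ n * x) := by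
  induction n with
  | zero => simp
  | succ n ih =>
    rw [pow_succ, ← mul_assoc, ih, smul_mul_assoc, mul_assoc, h, mul_smul_comm, smul_smul,
      ← mul_assoc, ← pow_succ]

theorem pow_succ_mul_sub_mul_pow_succ {q : K} (hq0 : q ≠ 0) {a b k k' : A}
    (hab : a * b - b * a = (q - q⁻¹) • (k' - k))
    (hka : k * a = (q ^ 2) • (a * k))
    (hak' : a * k' = (q ^ 2) • (k' * a)) (n : ℕ) :
    a ^ (n + 1) * b - b * a ^ (n + 1) = (q - q⁻¹ ^ (2 * n + 1)) • (a ^ n * k' - k * a ^ n) := by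
  have hinv : q * q⁻¹ = 1 := mul_inv_cancel₀ hq0
  have hak : a * k = q⁻¹ ^ 2 • (k * a) := by
    rw [hka, smul_smul, ← mul_pow, inv_mul_cancel₀ hq0, one_pow, one_smul]
  have hk'a : k' * a = q⁻¹ ^ 2 • (a * k') := by
    rw [hak', smul_smul, ← mul_pow, inv_mul_cancel₀ hq0, one_pow, one_smul]
  induction n with
  | zero => simpa using hab
  | succ n ih =>
    have hsplit : a ^ (n + 2) * b - b * a ^ (n + 2)
        = a * (a ^ (n + 1) * b - b * a ^ (n + 1)) + (a * b - b * a) * a ^ (n + 1) := by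
      rw [pow_succ' a (n + 1)]
      noncomm_ring
    have hk : a * (k * a ^ n) = q⁻¹ ^ 2 • (k * a ^ (n + 1)) := by
      rw [← mul_assoc, hak, smul_mul_assoc, mul_assoc, ← pow_succ']
    have hk' : k' * a ^ (n + 1) = q⁻¹ ^ (2 * (n + 1)) • (a ^ (n + 1) * k') := by
      rw [mul_pow_eq_smul_pow_mul hk'a, ← pow_mul]
    rw [hsplit, ih, hab, mul_smul_comm, mul_sub, hk, ← mul_assoc, ← pow_succ', smul_mul_assoc,
      sub_mul, hk']
    linear_combination (norm := module)
      (q⁻¹ ^ (2 * n + 1) * hinv) • (a ^ (n + 1) * k') - (q⁻¹ * hinv) • (k * a ^ (n + 1))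

end Commutation

section Coefficients

variable {K : Type*} [Field K]

def dilogCoeff (p : K) (n : ℕ) : K := p ^ n ^ 2 / ∏ j ∈ Finset.Icc 1 n, (1 - p ^ (2 * j))

theorem dilogCoeff_succ_mul {p : K} (hp0 : p ≠ 0) (hp : ∀ n : ℕ, 1 ≤ n → p ^ n ≠ 1) (n : ℕ) :
    dilogCoeff p (n + 1) * (p - p⁻¹ ^ (2 * n + 1)) = -dilogCoeff p n := by
  have hfactor : ∀ j, 1 ≤ j → 1 - p ^ (2 * j) ≠ 0 := fun j hj =>
    sub_ne_zero.mpr (hp (2 * j) (by omega)).symm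
  have hprod : ∏ j ∈ Finset.Icc 1 n, (1 - p ^ (2 * j)) ≠ 0 :=
    Finset.prod_ne_zero_iff.mpr fun j hj => hfactor j (Finset.mem_Icc.mp hj).1
  have hlast := hfactor (n + 1) le_add_self
  unfold dilogCoeff
  rw [Finset.prod_Icc_succ_top le_add_self, show (n + 1) ^ 2 = n ^ 2 + (2 * n + 1) by ring,
    pow_add, inv_pow]
  field_simp
  ring

theorem Psi_one_eq_mk (A : Type*) [Ring A] [Algebra K A] (p : K) (a : A) :
    Psi A p 1 a = PowerSeries.mk fun n => dilogCoeff p n • a ^ n := by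
  simp [Psi, dilogCoeff]

end Coefficients

namespace PowerSeries

variable {R : Type*} [Ring R]

theorem coeff_succ_mul_C_add_C_mul_X (f : R⟦X⟧) (b c : R) (n : ℕ) :
    coeff (n + 1) (f * (C b + C c * X)) = coeff (n + 1) f * b + coeff n f * c := by
  rw [mul_add, ← mul_assoc, map_add, coeff_mul_C, coeff_succ_mul_X, coeff_mul_C]

theorem coeff_succ_C_add_C_mul_X_mul (f : R⟦X⟧) (b c : R) (n : ℕ) :
    coeff (n + 1) ((C b + C c * X) * f) = b * coeff (n + 1) f + c * coeff n f := by
  rw [add_mul, mul_assoc, ← (commute_X f).eq, ← mul_assoc, map_add, coeff_C_mul,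
    coeff_succ_mul_X, coeff_C_mul]

end PowerSeries

/-- Lemma on sl₂-triples: if `a·b − b·a = (q − q⁻¹)(k′ − k)`,
`k·a = q²·a·k` and `a·k′ = q²·k′·a` in `A`, then in `A[[T]]` we have
`Ψ_q⁽¹⁾(a) · (b + k′·T) = (b + k·T) · Ψ_q⁽¹⁾(a)`. -/
theorem sl2_dilogarithm_conjugation
    {K : Type*} [Field K] {A : Type*} [Ring A] [Algebra K A]
    (q : K) (hq0 : q ≠ 0) (hq : ∀ n : ℕ, 1 ≤ n → q ^ n ≠ 1)
    (a b k k' : A)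
    (hab : a * b - b * a = (q - q⁻¹) • (k' - k))
    (hka : k * a = (q ^ 2) • (a * k))
    (hak' : a * k' = (q ^ 2) • (k' * a)) :
    Psi A q 1 a * (PowerSeries.C (R := A) b + PowerSeries.C (R := A) k' * PowerSeries.X)
      = (PowerSeries.C (R := A) b + PowerSeries.C (R := A) k * PowerSeries.X) * Psi A q 1 a := by
  rw [Psi_one_eq_mk]
  ext (_ | n)
  · simp [dilogCoeff]
  rw [PowerSeries.coeff_succ_mul_C_add_C_mul_X, PowerSeries.coeff_succ_C_add_C_mul_X_mul]
  simp only [PowerSeries.coeff_mk, smul_mul_assoc, mul_smul_comm]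
  have hcomm := congrArg (dilogCoeff q (n + 1) • ·)
    (pow_succ_mul_sub_mul_pow_succ hq0 hab hka hak' n)
  simp only [smul_smul, dilogCoeff_succ_mul hq0 hq] at hcomm
  linear_combination (norm := module) hcomm
end

section
/- Pentagon equation (simply-laced case, eq. (gvu) of the paper): if u, v ∈ A satisfy u·v = q²·v·u, then Ψ_q^{(1)}(v) · Ψ_q^{(1)}(u) = Ψ_q^{(1)}(u) · Ψ_q^{(2)}(q⁻¹·u·v) · Ψ_q^{(1)}(v) in A[[T]]. -/
/-!
Write `dilog q x = ∑ cₙ • xⁿ` with `cₙ = q^(n²) / ∏_{k ≤ n} (1 - q^(2k))`, so that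
`Ψ_q⁽ᵐ⁾(a) = dilog q (a Tᵐ)`; once `A` is discrete these sums converge `T`-adically.
Let `x y = q² y x`. The `q`-binomial theorem gives `dilog x · dilog y = dilog (x + y)`.
The recursion `(1 - q^(2n)) cₙ = q^(2n-1) cₙ₋₁` gives `dilog (q⁻² y) = (1 + q⁻¹ y) · dilog y`,
hence `dilog y · x = (x + q⁻¹ x y) · dilog y`, and therefore
`dilog y · dilog x = dilog (x + q⁻¹ x y) · dilog y = dilog x · dilog (q⁻¹ x y) · dilog y`,
the last step being the product formula again, as `x` and `q⁻¹ x y` also `q²`-commute.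
-/

open Finset

namespace QuantumDilogarithm

variable {K : Type*} [Field K] {q : K}

noncomputable def dilogCoeff (q : K) (n : ℕ) : K :=
  q ^ (n ^ 2) / ∏ k ∈ Icc 1 n, (1 - q ^ (2 * k))

@[simp]
lemma dilogCoeff_zero : dilogCoeff q 0 = 1 := by
  simp [dilogCoeff]

lemma one_sub_pow_two_mul_ne_zero (hq : ∀ n : ℕ, 1 ≤ n → q ^ n ≠ 1) {k : ℕ} (hk : 1 ≤ k) :
    1 - q ^ (2 * k) ≠ 0 :=
  sub_ne_zero.mpr (hq (2 * k) (by omega)).symm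

lemma one_sub_mul_dilogCoeff_succ (hq : ∀ n : ℕ, 1 ≤ n → q ^ n ≠ 1) (n : ℕ) :
    (1 - q ^ (2 * (n + 1))) * dilogCoeff q (n + 1) = q ^ (2 * n + 1) * dilogCoeff q n := by
  have hprod : ∏ k ∈ Icc 1 n, (1 - q ^ (2 * k)) ≠ 0 :=
    prod_ne_zero_iff.mpr fun k hk => one_sub_pow_two_mul_ne_zero hq (mem_Icc.mp hk).1
  have hlast := one_sub_pow_two_mul_ne_zero hq (Nat.le_add_left 1 n)
  rw [dilogCoeff, dilogCoeff, prod_Icc_succ_top (by omega)]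
  field_simp
  ring

lemma dilogCoeff_succ_mul_inv_pow (hq0 : q ≠ 0) (hq : ∀ n : ℕ, 1 ≤ n → q ^ n ≠ 1) (n : ℕ) :
    dilogCoeff q (n + 1) * ((q ^ 2)⁻¹) ^ (n + 1) = dilogCoeff q (n + 1) + q⁻¹ * dilogCoeff q n := by
  have hrec := one_sub_mul_dilogCoeff_succ hq n
  rw [inv_pow, ← pow_mul]
  field_simp
  linear_combination q * hrec

section QCommuting

variable {B : Type*} [Ring B] [Algebra K B]

lemma pow_mul_of_mul_eq_smul {s : K} {x y : B} (h : y * x = s • (x * y)) (n : ℕ) :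
    y ^ n * x = s ^ n • (x * y ^ n) := by
  induction n with
  | zero => simp
  | succ n ih =>
    rw [pow_succ, mul_assoc, h, mul_smul_comm, ← mul_assoc, ih, smul_mul_assoc, smul_smul,
      mul_assoc, ← pow_succ, ← pow_succ']

lemma pow_mul_pow_mul_add {s : K} {x y : B} (h : y * x = s • (x * y)) (a b : ℕ) :
    x ^ a * y ^ b * (x + y) = s ^ b • (x ^ (a + 1) * y ^ b) + x ^ a * y ^ (b + 1) := by
  rw [mul_add, mul_assoc, pow_mul_of_mul_eq_smul h, mul_smul_comm, ← mul_assoc, ← pow_succ,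
    mul_assoc, ← pow_succ]

theorem dilogCoeff_smul_add_pow (hq0 : q ≠ 0) (hq : ∀ n : ℕ, 1 ≤ n → q ^ n ≠ 1) {x y : B}
    (h : x * y = q ^ 2 • (y * x)) (n : ℕ) :
    dilogCoeff q n • (x + y) ^ n =
      ∑ p ∈ antidiagonal n, (dilogCoeff q p.1 * dilogCoeff q p.2) • (x ^ p.1 * y ^ p.2) := by
  have hyx : y * x = (q ^ 2)⁻¹ • (x * y) := by
    rw [h, inv_smul_smul₀ (pow_ne_zero 2 hq0)]
  set c := dilogCoeff q
  have hrec : ∀ n, (1 - q ^ (2 * (n + 1))) * c (n + 1) = q ^ (2 * n + 1) * c n :=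
    one_sub_mul_dilogCoeff_succ hq
  induction n with
  | zero => simp [c]
  | succ n ih =>
    apply smul_right_injective B (one_sub_pow_two_mul_ne_zero hq (Nat.le_add_left 1 n))
    beta_reduce
    have hstep : ∀ p ∈ antidiagonal n,
        q ^ (2 * n + 1) • ((c p.1 * c p.2) • (x ^ p.1 * y ^ p.2) * (x + y)) =
          (q ^ (2 * p.1 + 1) * c p.1 * c p.2) • (x ^ (p.1 + 1) * y ^ p.2) +
          (q ^ (2 * p.1) * (q ^ (2 * p.2 + 1) * c p.2) * c p.1) • (x ^ p.1 * y ^ (p.2 + 1)) := by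
      rintro ⟨a, b⟩ hab
      rw [HasAntidiagonal.mem_antidiagonal] at hab
      dsimp only at hab ⊢
      rw [smul_mul_assoc, pow_mul_pow_mul_add hyx, smul_add, smul_add, smul_smul, smul_smul,
        smul_smul, ← hab]
      congr 2
      · rw [inv_pow, ← pow_mul, show 2 * (a + b) + 1 = 2 * b + (2 * a + 1) by ring, pow_add]
        field_simp
      · ring
    have hsplit : ∀ p ∈ antidiagonal (n + 1),
        (1 - q ^ (2 * (n + 1))) • ((c p.1 * c p.2) • (x ^ p.1 * y ^ p.2)) =
          ((1 - q ^ (2 * p.1)) * c p.1 * c p.2) • (x ^ p.1 * y ^ p.2) +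
          (q ^ (2 * p.1) * ((1 - q ^ (2 * p.2)) * c p.2) * c p.1) • (x ^ p.1 * y ^ p.2) := by
      rintro ⟨a, b⟩ hab
      rw [HasAntidiagonal.mem_antidiagonal] at hab
      -- `1 - q^(2(a+b)) = (1 - q^(2a)) + q^(2a) (1 - q^(2b))`; the recursion then shifts each
      -- half back to `antidiagonal n`.
      rw [← hab, smul_smul, ← add_smul]
      ring_nf
    rw [smul_smul, hrec, mul_smul, pow_succ (x + y), ← smul_mul_assoc, ih, sum_mul, smul_sum,
      sum_congr rfl hstep, sum_add_distrib, smul_sum, sum_congr rfl hsplit, sum_add_distrib,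
      Nat.sum_antidiagonal_succ, Nat.sum_antidiagonal_succ' (n := n)]
    simp only [hrec, mul_zero, pow_zero, sub_self, zero_mul, zero_smul, zero_add]

end QCommuting

section Series

open PowerSeries
open scoped PowerSeries.WithPiTopology

variable {A : Type*} [Ring A]

lemma pow_monomial (m : ℕ) (a : A) (n : ℕ) : monomial m a ^ n = monomial (m * n) (a ^ n) := by
  induction n with
  | zero => simp
  | succ n ih => rw [pow_succ, ih, monomial_mul_monomial, ← pow_succ, Nat.mul_succ]

lemma constantCoeff_monomial_of_ne_zero {m : ℕ} (hm : m ≠ 0) (a : A) :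
    constantCoeff (monomial m a) = 0 := by
  rw [← coeff_zero_eq_constantCoeff_apply, coeff_monomial, if_neg (Ne.symm hm)]

lemma summable_of_finite_setOf_order_le [TopologicalSpace A] {ι : Type*} {f : ι → A⟦X⟧}
    (h : ∀ d : ℕ, {i | (f i).order ≤ d}.Finite) : Summable f := by
  rw [WithPiTopology.summable_iff_summable_coeff]
  refine fun d => summable_of_hasFiniteSupport ((h d).subset fun i hi => ?_)
  by_contra hlt
  exact hi (coeff_of_lt_order d (not_le.mp hlt))

variable [Algebra K A]

lemma monomial_smul (n : ℕ) (c : K) (a : A) : monomial n (c • a) = c • monomial n a := by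
  ext i
  rw [coeff_smul, coeff_monomial, coeff_monomial, smul_ite, smul_zero]

lemma natCast_le_order_smul_pow (c : K) {x : A⟦X⟧} (hx : constantCoeff x = 0) (n : ℕ) :
    (n : ℕ∞) ≤ (c • x ^ n).order :=
  le_order _ _ fun i hi => by
    rw [coeff_smul, coeff_of_lt_order i (hi.trans_le (le_order_pow_of_constantCoeff_eq_zero n hx)),
      smul_zero]

variable [TopologicalSpace A]

lemma summable_smul_pow (c : ℕ → K) {x : A⟦X⟧} (hx : constantCoeff x = 0) :
    Summable fun n => c n • x ^ n :=
  summable_of_finite_setOf_order_le fun d => (Set.finite_Iic d).subset fun n hn =>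
    Nat.cast_le.mp ((natCast_le_order_smul_pow (c n) hx n).trans hn)

lemma summable_smul_pow_mul_smul_pow (c : ℕ → K) {x y : A⟦X⟧} (hx : constantCoeff x = 0)
    (hy : constantCoeff y = 0) :
    Summable fun p : ℕ × ℕ => (c p.1 • x ^ p.1) * (c p.2 • y ^ p.2) :=
  summable_of_finite_setOf_order_le fun d =>
    ((Set.finite_Iic d).prod (Set.finite_Iic d)).subset fun p hp => by
      have := ((add_le_add (natCast_le_order_smul_pow (c p.1) hx p.1)
        (natCast_le_order_smul_pow (c p.2) hy p.2)).trans (le_order_mul _ _)).trans hp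
      norm_cast at this
      exact ⟨Set.mem_Iic.mpr (by omega), Set.mem_Iic.mpr (by omega)⟩

noncomputable def dilog (q : K) (x : A⟦X⟧) : A⟦X⟧ :=
  ∑' n, dilogCoeff q n • x ^ n

theorem Psi_eq_dilog [T2Space A] {m : ℕ} (hm : m ≠ 0) (a : A) :
    Psi A q m a = dilog q (monomial m a) := by
  refine (HasSum.tsum_eq ?_).symm
  rw [WithPiTopology.hasSum_iff_hasSum_coeff]
  intro d
  have hterm (n : ℕ) : coeff d (dilogCoeff q n • monomial m a ^ n) =
      if d = m * n then dilogCoeff q n • a ^ n else 0 := by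
    rw [coeff_smul, pow_monomial, coeff_monomial, smul_ite, smul_zero]
  simp only [hterm, Psi, coeff_mk]
  by_cases hdvd : m ∣ d
  · obtain ⟨k, rfl⟩ := hdvd
    rw [if_pos (dvd_mul_right m k), Nat.mul_div_cancel_left k (Nat.pos_of_ne_zero hm)]
    simp only [mul_right_inj' hm, eq_comm (a := k)]
    convert hasSum_single k fun n (hn : n ≠ k) => if_neg hn using 1
    exact (if_pos rfl).symm
  · rw [if_neg hdvd]
    convert hasSum_zero with n
    exact if_neg fun hn => hdvd ⟨n, hn⟩

variable [IsTopologicalRing A] [T2Space A]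

lemma dilog_inv_sq_smul (hq0 : q ≠ 0) (hq : ∀ n : ℕ, 1 ≤ n → q ^ n ≠ 1) {y : A⟦X⟧}
    (hy : constantCoeff y = 0) :
    dilog q ((q ^ 2)⁻¹ • y) = (1 + q⁻¹ • y) * dilog q y := by
  have hs := summable_smul_pow (dilogCoeff q) hy
  have hs' := summable_smul_pow (fun n => dilogCoeff q n * ((q ^ 2)⁻¹) ^ n) hy
  simp only [dilog, smul_pow, smul_smul]
  rw [add_mul, one_mul, ← hs.tsum_mul_left, hs'.tsum_eq_zero_add, hs.tsum_eq_zero_add, add_assoc,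
    ← Summable.tsum_add ((summable_nat_add_iff 1).mpr hs) (hs.mul_left _)]
  congr 1
  · simp
  · refine tsum_congr fun n => ?_
    rw [dilogCoeff_succ_mul_inv_pow hq0 hq, add_smul, smul_mul_smul_comm, ← pow_succ', mul_comm q⁻¹]

lemma _root_.SemiconjBy.dilog_right {a x x' : A⟦X⟧} (h : SemiconjBy a x x')
    (hx : constantCoeff x = 0) (hx' : constantCoeff x' = 0) :
    SemiconjBy a (dilog q x) (dilog q x') := by
  unfold SemiconjBy dilog
  rw [← (summable_smul_pow _ hx).tsum_mul_left, ← (summable_smul_pow _ hx').tsum_mul_right]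
  exact tsum_congr fun n => by rw [mul_smul_comm, (h.pow_right n).eq, smul_mul_assoc]

lemma dilog_semiconjBy (hq0 : q ≠ 0) (hq : ∀ n : ℕ, 1 ≤ n → q ^ n ≠ 1) {x y : A⟦X⟧}
    (hy : constantCoeff y = 0) (h : x * y = q ^ 2 • (y * x)) :
    SemiconjBy (dilog q y) x (x + q⁻¹ • (x * y)) := by
  have hyx : y * x = (q ^ 2)⁻¹ • (x * y) := by
    rw [h, inv_smul_smul₀ (pow_ne_zero 2 hq0)]
  calc dilog q y * x = x * dilog q ((q ^ 2)⁻¹ • y) := by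
        unfold dilog
        rw [← (summable_smul_pow (dilogCoeff q) hy).tsum_mul_right,
          ← (summable_smul_pow (dilogCoeff q) (x := (q ^ 2)⁻¹ • y)
            (by rw [constantCoeff_smul, hy, smul_zero])).tsum_mul_left]
        exact tsum_congr fun n => by
          rw [smul_mul_assoc, pow_mul_of_mul_eq_smul hyx, smul_pow, mul_smul_comm, mul_smul_comm,
            smul_comm]
    _ = (x + q⁻¹ • (x * y)) * dilog q y := by
        rw [dilog_inv_sq_smul hq0 hq hy, ← mul_assoc, mul_add, mul_one, mul_smul_comm]

theorem dilog_mul_dilog (hq0 : q ≠ 0) (hq : ∀ n : ℕ, 1 ≤ n → q ^ n ≠ 1) {x y : A⟦X⟧}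
    (hx : constantCoeff x = 0) (hy : constantCoeff y = 0) (h : x * y = q ^ 2 • (y * x)) :
    dilog q x * dilog q y = dilog q (x + y) := by
  unfold dilog
  rw [(summable_smul_pow _ hx).tsum_mul_tsum_eq_tsum_sum_antidiagonal (summable_smul_pow _ hy)
    (summable_smul_pow_mul_smul_pow _ hx hy)]
  refine tsum_congr fun n => ?_
  simp only [dilogCoeff_smul_add_pow hq0 hq h n, smul_mul_smul_comm]

theorem dilog_pentagon (hq0 : q ≠ 0) (hq : ∀ n : ℕ, 1 ≤ n → q ^ n ≠ 1) {x y : A⟦X⟧}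
    (hx : constantCoeff x = 0) (hy : constantCoeff y = 0) (h : x * y = q ^ 2 • (y * x)) :
    dilog q y * dilog q x = dilog q x * dilog q (q⁻¹ • (x * y)) * dilog q y := by
  have hxy : constantCoeff (q⁻¹ • (x * y)) = 0 := by simp [hx]
  have hx_xy : x * (q⁻¹ • (x * y)) = q ^ 2 • ((q⁻¹ • (x * y)) * x) := by
    rw [smul_mul_assoc, mul_smul_comm, smul_comm (q ^ 2), mul_assoc x y x,
      ← mul_smul_comm (q ^ 2) x, ← h]
  rw [((dilog_semiconjBy hq0 hq hy h).dilog_right hx (by simp [hx, hxy])).eq,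
    dilog_mul_dilog hq0 hq hx hxy hx_xy]

end Series

end QuantumDilogarithm

open PowerSeries QuantumDilogarithm

/-- pentagon equation, simply-laced case: if `u·v = q²·v·u` then
`Ψ_q⁽¹⁾(v)·Ψ_q⁽¹⁾(u) = Ψ_q⁽¹⁾(u)·Ψ_q⁽²⁾(q⁻¹·u·v)·Ψ_q⁽¹⁾(v)` in `A[[T]]`. -/
theorem pentagon_equation
    {K : Type*} [Field K] (q : K) (hq0 : q ≠ 0) (hq : ∀ n : ℕ, 1 ≤ n → q ^ n ≠ 1)
    {A : Type*} [Ring A] [Algebra K A]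
    (u v : A) (huv : u * v = (q ^ 2) • (v * u)) :
    Psi A q 1 v * Psi A q 1 u = Psi A q 1 u * Psi A q 2 (q⁻¹ • (u * v)) * Psi A q 1 v := by
  let : TopologicalSpace A := ⊥
  have : DiscreteTopology A := ⟨rfl⟩
  have hUV : monomial 1 u * monomial 1 v = q ^ 2 • (monomial 1 v * monomial 1 u) := by
    rw [monomial_mul_monomial, monomial_mul_monomial, huv, monomial_smul]
  have hW : monomial 2 (q⁻¹ • (u * v)) = q⁻¹ • (monomial 1 u * monomial 1 v) := by
    rw [monomial_mul_monomial, monomial_smul]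
  rw [Psi_eq_dilog one_ne_zero, Psi_eq_dilog one_ne_zero, Psi_eq_dilog two_ne_zero, hW]
  exact dilog_pentagon hq0 hq (constantCoeff_monomial_of_ne_zero one_ne_zero u)
    (constantCoeff_monomial_of_ne_zero one_ne_zero v) hUV
end

section
/- Generalized pentagon equation (eq. (g12) of the paper): let u, v ∈ A and set c := (u·v − v·u)/(q − q⁻¹). If u·c = q²·c·u and c·v = q²·v·c, then Ψ_q^{(1)}(v) · Ψ_q^{(1)}(u) = Ψ_q^{(1)}(u) · Ψ_q^{(2)}(c) · Ψ_q^{(1)}(v) in A[[T]]. -/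
open PowerSeries Finset

/-! ### Scalar coefficient lemmas -/

noncomputable def qcoef {K : Type*} [Field K] (q : K) (n : ℕ) : K :=
  q ^ (n ^ 2) / ∏ k ∈ Finset.Icc 1 n, (1 - q ^ (2 * k))

section Scalars

variable {K : Type*} [Field K]

lemma qcoef_zero (q : K) : qcoef q 0 = 1 := by simp [qcoef]

lemma qprod_ne_zero {q : K} (hq : ∀ n : ℕ, 1 ≤ n → q ^ n ≠ 1) (n : ℕ) :
    ∏ k ∈ Finset.Icc 1 n, (1 - q ^ (2 * k)) ≠ 0 := by
  rw [Finset.prod_ne_zero_iff]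
  intro k hk
  rw [Finset.mem_Icc] at hk
  intro h
  exact hq (2 * k) (by omega) (by linear_combination -h)

lemma qcoef_ne_zero {q : K} (hq0 : q ≠ 0) (hq : ∀ n : ℕ, 1 ≤ n → q ^ n ≠ 1) (n : ℕ) :
    qcoef q n ≠ 0 :=
  div_ne_zero (pow_ne_zero _ hq0) (qprod_ne_zero hq n)

lemma qcoef_succ {q : K} (hq : ∀ n : ℕ, 1 ≤ n → q ^ n ≠ 1) (n : ℕ) :
    (1 - q ^ (2 * (n + 1))) * qcoef q (n + 1) = q ^ (2 * n + 1) * qcoef q n := by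
  have hP := qprod_ne_zero hq n
  have hP1 := qprod_ne_zero hq (n + 1)
  have hprod : ∏ k ∈ Finset.Icc 1 (n+1), (1 - q ^ (2 * k))
      = (∏ k ∈ Finset.Icc 1 n, (1 - q ^ (2 * k))) * (1 - q ^ (2 * (n+1))) := by
    rw [Finset.prod_Icc_succ_top (by omega)]
  have hpow : (n + 1) ^ 2 = n ^ 2 + (2 * n + 1) := by ring
  have hne : (1 - q ^ (2 * (n+1))) ≠ 0 := by
    intro h
    exact hq (2 * (n+1)) (by omega) (by linear_combination -h)
  rw [qcoef, qcoef, hprod, hpow, pow_add]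
  field_simp

lemma qpow_ne_one {q : K} (hq : ∀ n : ℕ, 1 ≤ n → q ^ n ≠ 1) (j : ℕ) (hj : 1 ≤ j) :
    (1 - q ^ (2 * j)) ≠ 0 := fun h => hq (2*j) (by omega) (by linear_combination -h)

lemma qcoef_succ' {q : K} (hq : ∀ n : ℕ, 1 ≤ n → q ^ n ≠ 1) (n : ℕ) :
    qcoef q (n+1) = q ^ (2 * n + 1) * qcoef q n / (1 - q ^ (2 * (n + 1))) :=
  (eq_div_iff (qpow_ne_one hq (n+1) (by omega))).mpr (by linear_combination qcoef_succ hq n)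

lemma Cq_core {q : K} (hq0 : q ≠ 0) (hq : ∀ n : ℕ, 1 ≤ n → q ^ n ≠ 1) (k m : ℕ) :
    qcoef q (k+1) * qcoef q (m+1) * qcoef q (k+m+1)
      = (q^(2*(k+1)))⁻¹ * (qcoef q (k+1) * qcoef q m * qcoef q (k+m+2)) +
        qcoef q k * qcoef q (m+1) * qcoef q (k+m+2) := by
  have e1 := qcoef_succ' hq k
  have e2 := qcoef_succ' hq m
  have e3 := qcoef_succ' hq (k+m+1)
  have h3 : k+m+1+1 = k+m+2 := rfl
  rw [h3] at e3
  rw [e1, e2, e3]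
  have n1 := qpow_ne_one hq (k+1) (by omega)
  have n2 := qpow_ne_one hq (m+1) (by omega)
  have n3 := qpow_ne_one hq (k+m+2) (by omega)
  field_simp
  ring

lemma geom_qcoef {q : K} (hq0 : q ≠ 0) (hq : ∀ n : ℕ, 1 ≤ n → q ^ n ≠ 1) (n : ℕ) :
    (q - q⁻¹) * (∑ j ∈ Finset.range (n+1), q ^ (2*j)) * qcoef q (n+1)
      = -(q ^ (2*n) * qcoef q n) := by
  have hgeom : (∑ j ∈ Finset.range (n+1), q ^ (2*j)) * (q^2 - 1) = q^(2*(n+1)) - 1 := by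
    have := geom_sum_mul (q^2) (n+1)
    simpa [pow_mul] using this
  apply mul_left_cancel₀ hq0
  have hs := qcoef_succ hq n
  calc q * ((q - q⁻¹) * (∑ j ∈ Finset.range (n+1), q ^ (2*j)) * qcoef q (n+1))
      = (q * (q - q⁻¹)) * ((∑ j ∈ Finset.range (n+1), q ^ (2*j)) * qcoef q (n+1)) := by ring
    _ = (q^2 - 1) * ((∑ j ∈ Finset.range (n+1), q ^ (2*j)) * qcoef q (n+1)) := by
        rw [mul_sub, mul_inv_cancel₀ hq0]; ring_nf
    _ = ((∑ j ∈ Finset.range (n+1), q ^ (2*j)) * (q^2-1)) * qcoef q (n+1) := by ring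
    _ = (q^(2*(n+1)) - 1) * qcoef q (n+1) := by rw [hgeom]
    _ = -((1 - q^(2*(n+1))) * qcoef q (n+1)) := by ring
    _ = q * -(q ^ (2*n) * qcoef q n) := by rw [hs]; ring

noncomputable def Cq (q : K) (n k : ℕ) : K :=
  if k ≤ n then qcoef q k * qcoef q (n - k) / qcoef q n else 0

lemma Cq_zero (q : K) {n k : ℕ} (h : n < k) : Cq q n k = 0 := by
  rw [Cq, if_neg (by omega)]

lemma Cq_zero_right {q : K} (hq0 : q ≠ 0) (hq : ∀ n : ℕ, 1 ≤ n → q ^ n ≠ 1) (n : ℕ) :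
    Cq q n 0 = 1 := by
  simp [Cq, qcoef_zero, div_self (qcoef_ne_zero hq0 hq n)]

lemma mul_Cq {q : K} (hq0 : q ≠ 0) (hq : ∀ n : ℕ, 1 ≤ n → q ^ n ≠ 1) {n k : ℕ} (h : k ≤ n) :
    qcoef q n * Cq q n k = qcoef q k * qcoef q (n - k) := by
  rw [Cq, if_pos h, mul_div_assoc']
  rw [mul_comm (qcoef q n), mul_div_assoc, div_self (qcoef_ne_zero hq0 hq n), mul_one]

lemma Cq_rec {q : K} (hq0 : q ≠ 0) (hq : ∀ n : ℕ, 1 ≤ n → q ^ n ≠ 1) {n k : ℕ} (h : k ≤ n) :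
    Cq q (n+1) (k+1) = (q^(2*(k+1)))⁻¹ * Cq q n (k+1) + Cq q n k := by
  rcases Nat.lt_or_ge k n with hkn | hkn
  · obtain ⟨m, rfl⟩ : ∃ m, n = k + 1 + m := ⟨n - k - 1, by omega⟩
    have hc := Cq_core hq0 hq k m
    rw [Cq, if_pos (by omega), Cq, if_pos (by omega), Cq, if_pos (by omega)]
    have d1 : k + 1 + m + 1 - (k+1) = m + 1 := by omega
    have d2 : k + 1 + m - (k+1) = m := by omega
    have d3 : k + 1 + m - k = m + 1 := by omega
    rw [d1, d2, d3]
    have hn1 := qcoef_ne_zero hq0 hq (k+1+m)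
    have hn2 := qcoef_ne_zero hq0 hq (k+1+m+1)
    have h5 : k+1+m = k+m+1 := by omega
    rw [h5] at hn1 hn2 ⊢
    rw [show k+m+1+1 = k+m+2 from rfl] at hn2 ⊢
    have hn3 : (q^(2*(k+1))) ≠ 0 := pow_ne_zero _ hq0
    have hc' : qcoef q (k + 1) * qcoef q (m + 1) * qcoef q (k + m + 1) * q ^ (2 * (k + 1)) =
      qcoef q (k + 1) * qcoef q m * qcoef q (k + m + 2) +
      qcoef q k * qcoef q (m + 1) * qcoef q (k + m + 2) * q ^ (2 * (k + 1)) := by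
      field_simp at hc
      linear_combination hc
    field_simp [hn1, hn2, hn3]
    linear_combination hc'
  · have : k = n := by omega
    subst this
    rw [Cq, if_pos le_rfl, Cq_zero q (by omega), Cq, if_pos le_rfl]
    simp [qcoef_zero, div_self (qcoef_ne_zero hq0 hq (k+1)), div_self (qcoef_ne_zero hq0 hq k)]

end Scalars

/-! ### Algebra-level commutation lemmas -/

section AlgLemmas

variable {K : Type*} [Field K] {A : Type*} [Ring A] [Algebra K A]

lemma upow_mul_c {q : K} {u c : A} (huc : u * c = (q ^ 2) • (c * u)) (n : ℕ) :
    u ^ n * c = (q ^ (2 * n)) • (c * u ^ n) := by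
  induction n with
  | zero => simp
  | succ n ih =>
    have h1 : u ^ (n+1) * c = u * (u ^ n * c) := by simp [pow_succ', mul_assoc]
    rw [h1, ih, mul_smul_comm, ← mul_assoc, huc, smul_mul_assoc, smul_smul]
    have h2 : c * u * u ^ n = c * u ^ (n+1) := by simp [pow_succ', mul_assoc]
    rw [h2, show q ^ (2*n) * q ^ 2 = q ^ (2 * (n+1)) by rw [← pow_add]; ring_nf]

lemma cpow_mul_v {q : K} {v c : A} (hcv : c * v = (q ^ 2) • (v * c)) (k : ℕ) :
    c ^ k * v = (q ^ (2 * k)) • (v * c ^ k) := by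
  induction k with
  | zero => simp
  | succ k ih =>
    have h1 : c ^ (k+1) * v = c * (c ^ k * v) := by simp [pow_succ', mul_assoc]
    rw [h1, ih, mul_smul_comm, ← mul_assoc, hcv, smul_mul_assoc, smul_smul]
    have h2 : v * c * c ^ k = v * c ^ (k+1) := by simp [pow_succ', mul_assoc]
    rw [h2, show q ^ (2*k) * q ^ 2 = q ^ (2 * (k+1)) by rw [← pow_add]; ring_nf]

lemma upow_mul_v {q : K} {u v c : A}
    (huv : u * v = v * u + (q - q⁻¹) • c)
    (huc : u * c = (q ^ 2) • (c * u)) (n : ℕ) :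
    u ^ (n+1) * v = v * u ^ (n+1)
      + ((q - q⁻¹) * ∑ j ∈ Finset.range (n+1), q ^ (2*j)) • (c * u ^ n) := by
  induction n with
  | zero => simpa using huv
  | succ n ih =>
    have h1 : u ^ (n+2) * v = u * (u ^ (n+1) * v) := by simp [pow_succ', mul_assoc]
    rw [h1, ih]
    have h2 : ∑ j ∈ Finset.range (n+2), q ^ (2*j)
        = 1 + q^2 * ∑ j ∈ Finset.range (n+1), q ^ (2*j) := by
      simp only [pow_mul]
      rw [geom_sum_succ]
      ring
    rw [mul_add, mul_smul_comm]
    have e1 : u * (v * u^(n+1)) = (u*v) * u^(n+1) := (mul_assoc u v _).symm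
    have e2 : u * (c * u^n) = q^2 • (c * u^(n+1)) := by
      rw [← mul_assoc, huc, smul_mul_assoc]
      congr 1
      simp [pow_succ', mul_assoc]
    rw [e1, e2, huv, add_mul, smul_mul_assoc, smul_smul]
    have e3 : (v*u) * u^(n+1) = v * u^(n+2) := by simp [pow_succ', mul_assoc]
    rw [e3, h2, add_assoc, ← add_smul]
    congr 2
    ring

end AlgLemmas

/-! ### Power series helpers -/

section PS

variable {K : Type*} [Field K] {A : Type*} [Ring A] [Algebra K A]

lemma mono_mul_mono (m n : ℕ) (a b : A) :
    (PowerSeries.monomial m a) * PowerSeries.monomial n b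
      = PowerSeries.monomial (m+n) (a*b) := by
  have := MvPowerSeries.monomial_mul_monomial (R := A) (Finsupp.single () m)
    (Finsupp.single () n) a b
  simpa [PowerSeries.monomial, ← Finsupp.single_add] using this

lemma coeff_mul_mono (φ : PowerSeries A) (d : ℕ) (a : A) (N : ℕ) :
    PowerSeries.coeff N (φ * PowerSeries.monomial d a)
      = if d ≤ N then PowerSeries.coeff (N-d) φ * a else 0 := by
  rw [PowerSeries.coeff_mul]
  by_cases h : d ≤ N
  · rw [Finset.sum_eq_single (N - d, d)]
    · simp [PowerSeries.coeff_monomial, h]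
    · intro b hb hne
      rw [Finset.HasAntidiagonal.mem_antidiagonal] at hb
      rw [PowerSeries.coeff_monomial]
      rw [if_neg, mul_zero]
      intro hbd
      exact hne (by ext <;> simp <;> omega)
    · intro hmem
      exact absurd (Finset.HasAntidiagonal.mem_antidiagonal.mpr (by omega)) hmem
  · rw [if_neg h]
    apply Finset.sum_eq_zero
    intro b hb
    rw [Finset.HasAntidiagonal.mem_antidiagonal] at hb
    rw [PowerSeries.coeff_monomial, if_neg (by omega), mul_zero]

lemma coeff_mono_mul (φ : PowerSeries A) (d : ℕ) (a : A) (N : ℕ) :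
    PowerSeries.coeff N (PowerSeries.monomial d a * φ)
      = if d ≤ N then a * PowerSeries.coeff (N-d) φ else 0 := by
  rw [PowerSeries.coeff_mul]
  by_cases h : d ≤ N
  · rw [Finset.sum_eq_single (d, N - d)]
    · simp [PowerSeries.coeff_monomial, h]
    · intro b hb hne
      rw [Finset.HasAntidiagonal.mem_antidiagonal] at hb
      rw [PowerSeries.coeff_monomial]
      rw [if_neg, zero_mul]
      intro hbd
      exact hne (by ext <;> simp <;> omega)
    · intro hmem
      exact absurd (Finset.HasAntidiagonal.mem_antidiagonal.mpr (by omega)) hmem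
  · rw [if_neg h]
    apply Finset.sum_eq_zero
    intro b hb
    rw [Finset.HasAntidiagonal.mem_antidiagonal] at hb
    rw [PowerSeries.coeff_monomial, if_neg (by omega), zero_mul]

lemma coeff_mul_congr_left {f f' g : PowerSeries A} {N : ℕ}
    (h : ∀ j ≤ N, PowerSeries.coeff j f = PowerSeries.coeff j f') :
    PowerSeries.coeff N (f * g) = PowerSeries.coeff N (f' * g) := by
  rw [PowerSeries.coeff_mul, PowerSeries.coeff_mul]
  apply Finset.sum_congr rfl
  intro b hb
  rw [Finset.HasAntidiagonal.mem_antidiagonal] at hb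
  rw [h b.1 (by omega)]

lemma coeff_mul_congr_right {f f' g : PowerSeries A} {N : ℕ}
    (h : ∀ j ≤ N, PowerSeries.coeff j f = PowerSeries.coeff j f') :
    PowerSeries.coeff N (g * f) = PowerSeries.coeff N (g * f') := by
  rw [PowerSeries.coeff_mul, PowerSeries.coeff_mul]
  apply Finset.sum_congr rfl
  intro b hb
  rw [Finset.HasAntidiagonal.mem_antidiagonal] at hb
  rw [h b.2 (by omega)]

end PS

/-! ### The series and commutation identities -/

section R

variable {K : Type*} [Field K] {A : Type*} [Ring A] [Algebra K A]

noncomputable def psiMk (q : K) (a : A) : PowerSeries A :=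
  PowerSeries.mk fun n => qcoef q n • a ^ n

noncomputable def psiMkS (q : K) (a : A) : PowerSeries A :=
  PowerSeries.mk fun n => (q ^ (2*n) * qcoef q n) • a ^ n

lemma mono_pow (d : ℕ) (a : A) (n : ℕ) :
    (PowerSeries.monomial d a) ^ n = PowerSeries.monomial (d*n) (a^n) := by
  induction n with
  | zero => simp [PowerSeries.monomial_zero_eq_C_apply]
  | succ n ih =>
    rw [pow_succ, ih, mono_mul_mono, show d*n+d = d*(n+1) by ring, ← pow_succ]

lemma psi_mul_Zc {q : K} {u c : A} (huc : u * c = (q ^ 2) • (c * u)) :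
    psiMk q u * PowerSeries.monomial 2 c
      = PowerSeries.monomial 2 c * psiMkS q u := by
  ext N
  rw [coeff_mul_mono, coeff_mono_mul]
  by_cases h : 2 ≤ N
  · rw [if_pos h, if_pos h]
    rw [psiMk, psiMkS, PowerSeries.coeff_mk, PowerSeries.coeff_mk]
    rw [smul_mul_assoc, upow_mul_c huc, smul_smul, mul_smul_comm]
    congr 1
    ring
  · rw [if_neg h, if_neg h]

lemma psi_mul_Yv {q : K} (hq0 : q ≠ 0) (hq : ∀ n : ℕ, 1 ≤ n → q ^ n ≠ 1) {u v c : A}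
    (huv : u * v = v * u + (q - q⁻¹) • c)
    (huc : u * c = (q ^ 2) • (c * u)) :
    psiMk q u * PowerSeries.monomial 1 v + PowerSeries.monomial 2 c * psiMkS q u
      = PowerSeries.monomial 1 v * psiMk q u := by
  ext N
  rw [map_add, coeff_mul_mono, coeff_mono_mul, coeff_mono_mul]
  match N with
  | 0 => norm_num
  | 1 =>
    rw [if_pos le_rfl, if_neg (by omega), if_pos le_rfl, add_zero]
    rw [show (1:ℕ)-1 = 0 from rfl, psiMk, PowerSeries.coeff_mk]
    simp [qcoef_zero]
  | (M+2) =>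
    rw [if_pos (by omega), if_pos (by omega), if_pos (by omega)]
    rw [show M+2-1 = M+1 from rfl, show M+2-2 = M from rfl]
    rw [psiMk, psiMkS, PowerSeries.coeff_mk, PowerSeries.coeff_mk]
    rw [smul_mul_assoc, upow_mul_v huv huc M, smul_add, smul_smul, mul_smul_comm,
      mul_smul_comm]
    rw [add_assoc, ← add_smul]
    have hz : qcoef q (M+1) * ((q - q⁻¹) * ∑ j ∈ Finset.range (M+1), q ^ (2*j))
        + q ^ (2*M) * qcoef q M = 0 := by
      linear_combination geom_qcoef hq0 hq M
    rw [hz, zero_smul, add_zero]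

lemma psi_mul_W {q : K} (hq0 : q ≠ 0) (hq : ∀ n : ℕ, 1 ≤ n → q ^ n ≠ 1) {u v c : A}
    (huv : u * v = v * u + (q - q⁻¹) • c)
    (huc : u * c = (q ^ 2) • (c * u)) :
    psiMk q u * (PowerSeries.monomial 1 v + PowerSeries.monomial 2 c)
      = PowerSeries.monomial 1 v * psiMk q u := by
  rw [mul_add, psi_mul_Zc huc, psi_mul_Yv hq0 hq huv huc]

lemma psi_mul_W_pow {q : K} (hq0 : q ≠ 0) (hq : ∀ n : ℕ, 1 ≤ n → q ^ n ≠ 1) {u v c : A}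
    (huv : u * v = v * u + (q - q⁻¹) • c)
    (huc : u * c = (q ^ 2) • (c * u)) (n : ℕ) :
    psiMk q u * (PowerSeries.monomial 1 v + PowerSeries.monomial 2 c) ^ n
      = (PowerSeries.monomial 1 v) ^ n * psiMk q u := by
  induction n with
  | zero => simp
  | succ n ih =>
    rw [pow_succ', ← mul_assoc, psi_mul_W hq0 hq huv huc, mul_assoc, ih, ← mul_assoc,
      ← pow_succ']

end R


section R2

variable {K : Type*} [Field K] {A : Type*} [Ring A] [Algebra K A]

lemma mono_smul (i : ℕ) (κ : K) (x : A) :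
    PowerSeries.monomial i (κ • x) = κ • PowerSeries.monomial i x := by
  ext N
  rw [PowerSeries.coeff_smul, PowerSeries.coeff_monomial, PowerSeries.coeff_monomial]
  split <;> simp

lemma v_mul_normal {q : K} (hq0 : q ≠ 0) {v c : A} (hcv : c * v = (q ^ 2) • (v * c)) (k m : ℕ) :
    v * (c^k * v^m) = (q^(2*k))⁻¹ • (c^k * v^(m+1)) := by
  have h2 : c^k * v^(m+1) = (c^k * v) * v^m := by simp [pow_succ', mul_assoc]
  rw [h2, cpow_mul_v hcv k, smul_mul_assoc, smul_smul, inv_mul_cancel₀ (pow_ne_zero _ hq0),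
    one_smul, mul_assoc]

lemma W_pow_normal {q : K} (hq0 : q ≠ 0) (hq : ∀ n : ℕ, 1 ≤ n → q ^ n ≠ 1) {v c : A}
    (hcv : c * v = (q ^ 2) • (v * c)) (n : ℕ) :
    (PowerSeries.monomial 1 v + PowerSeries.monomial 2 c) ^ n
      = ∑ k ∈ Finset.range (n+1),
          Cq q n k • PowerSeries.monomial (n+k) (c^k * v^(n-k)) := by
  induction n with
  | zero =>
    simp [Cq_zero_right hq0 hq, PowerSeries.monomial_zero_eq_C_apply]
  | succ n ih =>
    rw [pow_succ', ih, Finset.mul_sum]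
    have hterm : ∀ k ∈ Finset.range (n+1),
        (PowerSeries.monomial 1 v + PowerSeries.monomial 2 c) *
          (Cq q n k • PowerSeries.monomial (n+k) (c^k * v^(n-k)))
        = (Cq q n k * (q^(2*k))⁻¹) • PowerSeries.monomial (n+1+k) (c^k * v^(n+1-k))
          + Cq q n k • PowerSeries.monomial (n+1+(k+1)) (c^(k+1) * v^(n-k)) := by
      intro k hk
      rw [Finset.mem_range] at hk
      rw [add_mul, mul_smul_comm, mul_smul_comm, mono_mul_mono, mono_mul_mono]
      congr 1
      · rw [v_mul_normal hq0 hcv k (n-k), show n-k+1 = n+1-k by omega,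
          show 1+(n+k) = n+1+k by omega, mono_smul, smul_smul]
      · rw [show 2+(n+k) = n+1+(k+1) by omega]
        congr 1
        rw [← mul_assoc, ← pow_succ']
    rw [Finset.sum_congr rfl hterm, Finset.sum_add_distrib]
    -- rewrite the RHS
    rw [Finset.sum_range_succ' (fun k => Cq q (n+1) k •
      PowerSeries.monomial (n+1+k) (c^k * v^(n+1-k))) (n+1)]
    simp only [Nat.add_sub_add_right, add_zero, Nat.sub_zero, pow_zero, one_mul]
    rw [Cq_zero_right hq0 hq, one_smul]
    have hrec : ∀ i ∈ Finset.range (n+1),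
        Cq q (n+1) (i+1) • PowerSeries.monomial (n+1+(i+1)) (c^(i+1) * v^(n-i))
        = ((q^(2*(i+1)))⁻¹ * Cq q n (i+1)) • PowerSeries.monomial (n+1+(i+1)) (c^(i+1) * v^(n-i))
          + Cq q n i • PowerSeries.monomial (n+1+(i+1)) (c^(i+1) * v^(n-i)) := by
      intro i hi
      rw [Finset.mem_range] at hi
      rw [Cq_rec hq0 hq (by omega), add_smul]
    rw [Finset.sum_congr rfl hrec, Finset.sum_add_distrib]
    -- now handle the first LHS sum : peel bottom
    rw [Finset.sum_range_succ' (fun k => (Cq q n k * (q^(2*k))⁻¹) •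
      PowerSeries.monomial (n+1+k) (c^k * v^(n+1-k))) n]
    simp only [Nat.add_sub_add_right, add_zero, Nat.sub_zero, Nat.mul_zero, pow_zero,
      inv_one, mul_one, one_mul]
    rw [Cq_zero_right hq0 hq, one_smul]
    -- peel top of the first RHS sum
    rw [Finset.sum_range_succ (fun i => ((q^(2*(i+1)))⁻¹ * Cq q n (i+1)) •
      PowerSeries.monomial (n+1+(i+1)) (c^(i+1) * v^(n-i))) n]
    rw [Cq_zero q (by omega), mul_zero, zero_smul, add_zero]
    have hcomm : ∀ i ∈ Finset.range n,
        (Cq q n (i+1) * (q^(2*(i+1)))⁻¹) • PowerSeries.monomial (n+1+(i+1)) (c^(i+1) * v^(n-i))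
        = ((q^(2*(i+1)))⁻¹ * Cq q n (i+1)) • PowerSeries.monomial (n+1+(i+1)) (c^(i+1) * v^(n-i)) := by
      intro i hi
      rw [mul_comm]
    rw [Finset.sum_congr rfl hcomm]
    abel

end R2


section Final

variable {K : Type*} [Field K] {A : Type*} [Ring A] [Algebra K A]

lemma coeff_W_pow {q : K} (hq0 : q ≠ 0) (hq : ∀ n : ℕ, 1 ≤ n → q ^ n ≠ 1) {v c : A}
    (hcv : c * v = (q ^ 2) • (v * c)) (n j : ℕ) :
    PowerSeries.coeff j ((PowerSeries.monomial 1 v + PowerSeries.monomial 2 c) ^ n)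
      = if n ≤ j ∧ j ≤ 2*n then Cq q n (j-n) • (c^(j-n) * v^(n-(j-n))) else 0 := by
  rw [W_pow_normal hq0 hq hcv, map_sum]
  simp only [PowerSeries.coeff_smul, PowerSeries.coeff_monomial, smul_ite, smul_zero]
  by_cases h1 : n ≤ j ∧ j ≤ 2*n
  · rw [if_pos h1, Finset.sum_eq_single (j-n)]
    · rw [if_pos (by omega)]
    · intro k hk hne
      rw [Finset.mem_range] at hk
      rw [if_neg (by omega)]
    · intro hmem
      exact absurd (Finset.mem_range.mpr (by omega)) hmem
  · rw [if_neg h1]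
    apply Finset.sum_eq_zero
    intro k hk
    rw [Finset.mem_range] at hk
    rw [if_neg (by omega)]

lemma key_eq {q : K} (hq0 : q ≠ 0) (hq : ∀ n : ℕ, 1 ≤ n → q ^ n ≠ 1) {v c : A}
    (hcv : c * v = (q ^ 2) • (v * c)) {j N : ℕ} (hjN : j ≤ N) :
    PowerSeries.coeff j
        ((PowerSeries.mk fun M => if 2 ∣ M then qcoef q (M/2) • c^(M/2) else (0:A)) * psiMk q v)
      = PowerSeries.coeff j (∑ n ∈ Finset.range (N+1),
          qcoef q n • (PowerSeries.monomial 1 v + PowerSeries.monomial 2 c) ^ n) := by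
  have hL : PowerSeries.coeff j
        ((PowerSeries.mk fun M => if 2 ∣ M then qcoef q (M/2) • c^(M/2) else (0:A)) * psiMk q v)
      = ∑ k ∈ Finset.range (j+1), (if 2*k ≤ j then
          (qcoef q k * qcoef q (j-2*k)) • (c^k * v^(j-2*k)) else 0) := by
    rw [PowerSeries.coeff_mul, Finset.Nat.sum_antidiagonal_eq_sum_range_succ_mk]
    simp only [PowerSeries.coeff_mk, psiMk, ite_mul, zero_mul]
    rw [← Finset.sum_filter, ← Finset.sum_filter]
    apply Finset.sum_nbij' (fun a => a/2) (fun k => 2*k)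
    · intro a ha
      simp only [Finset.mem_filter, Finset.mem_range] at ha ⊢
      omega
    · intro k hk
      simp only [Finset.mem_filter, Finset.mem_range] at hk ⊢
      exact ⟨by omega, ⟨k, by omega⟩⟩
    · intro a ha
      simp only [Finset.mem_filter, Finset.mem_range] at ha
      omega
    · intro k hk
      simp only [Finset.mem_filter, Finset.mem_range] at hk
      omega
    · intro a ha
      simp only [Finset.mem_filter, Finset.mem_range] at ha
      obtain ⟨ha1, d, hd⟩ := ha
      have h2a : 2*(a/2) = a := by omega
      rw [smul_mul_assoc, mul_smul_comm, smul_smul, h2a]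
  have hR : PowerSeries.coeff j (∑ n ∈ Finset.range (N+1),
          qcoef q n • (PowerSeries.monomial 1 v + PowerSeries.monomial 2 c) ^ n)
      = ∑ k ∈ Finset.range (j+1), (if 2*k ≤ j then
          (qcoef q k * qcoef q (j-2*k)) • (c^k * v^(j-2*k)) else 0) := by
    rw [map_sum]
    simp only [PowerSeries.coeff_smul, coeff_W_pow hq0 hq hcv, smul_ite, smul_zero, smul_smul]
    rw [← Finset.sum_subset (Finset.range_subset_range.mpr (by omega : j+1 ≤ N+1))
      (by intro x hx hxn; rw [Finset.mem_range] at *; rw [if_neg (by omega)])]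
    rw [← Finset.sum_range_reflect]
    apply Finset.sum_congr rfl
    intro k hk
    rw [Finset.mem_range] at hk
    by_cases h2 : 2*k ≤ j
    · have e1 : j + 1 - 1 - k = j - k := by omega
      have e2 : j - (j-k) = k := by omega
      rw [if_pos (by omega), if_pos h2, e1, e2, mul_Cq hq0 hq (by omega),
        show j-k-k = j-2*k by omega]
    · rw [if_neg (by omega), if_neg h2]
  rw [hL, hR]

end Final

/-- generalized pentagon equation: with
`c := (u·v − v·u)/(q − q⁻¹)`, if `u·c = q²·c·u` and `c·v = q²·v·c`, then
`Ψ_q⁽¹⁾(v)·Ψ_q⁽¹⁾(u) = Ψ_q⁽¹⁾(u)·Ψ_q⁽²⁾(c)·Ψ_q⁽¹⁾(v)` in `A[[T]]`. -/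
theorem generalized_pentagon_equation
    {K : Type*} [Field K] (q : K) (hq0 : q ≠ 0) (hq : ∀ n : ℕ, 1 ≤ n → q ^ n ≠ 1)
    {A : Type*} [Ring A] [Algebra K A]
    (u v c : A)
    (hc : c = (q - q⁻¹)⁻¹ • (u * v - v * u))
    (huc : u * c = (q ^ 2) • (c * u))
    (hcv : c * v = (q ^ 2) • (v * c)) :
    Psi A q 1 v * Psi A q 1 u = Psi A q 1 u * Psi A q 2 c * Psi A q 1 v := by
  have hq2 : q ^ 2 ≠ 1 := hq 2 (by omega)
  have hlam : q - q⁻¹ ≠ 0 := by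
    intro h
    apply hq2
    rw [sq]
    nth_rewrite 2 [sub_eq_zero.mp h]
    exact mul_inv_cancel₀ hq0
  have huv : u * v = v * u + (q - q⁻¹) • c := by
    rw [hc, smul_smul, mul_inv_cancel₀ hlam, one_smul]
    abel
  have hP1 : ∀ a : A, Psi A q 1 a = psiMk q a := by
    intro a
    ext n
    simp [Psi, psiMk, qcoef, Nat.div_one]
  have hP2 : Psi A q 2 c
      = PowerSeries.mk fun M => if 2 ∣ M then qcoef q (M/2) • c^(M/2) else (0:A) := by
    ext n
    simp [Psi, qcoef]
  rw [hP1, hP1, hP2, mul_assoc]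
  ext N
  have hvS : ∀ j ≤ N, PowerSeries.coeff j (psiMk q v)
      = PowerSeries.coeff j (∑ n ∈ Finset.range (N+1),
          qcoef q n • (PowerSeries.monomial 1 v)^n) := by
    intro j hj
    rw [psiMk, PowerSeries.coeff_mk, map_sum]
    simp only [PowerSeries.coeff_smul, mono_pow, one_mul, PowerSeries.coeff_monomial,
      smul_ite, smul_zero]
    rw [Finset.sum_ite_eq (Finset.range (N+1)) j (fun n => qcoef q n • v ^ n),
      if_pos (Finset.mem_range.mpr (by omega))]
  calc PowerSeries.coeff N (psiMk q v * psiMk q u)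
      = PowerSeries.coeff N ((∑ n ∈ Finset.range (N+1),
          qcoef q n • (PowerSeries.monomial 1 v)^n) * psiMk q u) :=
        coeff_mul_congr_left hvS
    _ = PowerSeries.coeff N (psiMk q u * ∑ n ∈ Finset.range (N+1),
          qcoef q n • (PowerSeries.monomial 1 v + PowerSeries.monomial 2 c)^n) := by
        congr 1
        rw [Finset.sum_mul, Finset.mul_sum]
        apply Finset.sum_congr rfl
        intro n _
        rw [smul_mul_assoc, mul_smul_comm, psi_mul_W_pow hq0 hq huv huc n]
    _ = PowerSeries.coeff N (psiMk q u *
          ((PowerSeries.mk fun M => if 2 ∣ M then qcoef q (M/2) • c^(M/2) else (0:A))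
            * psiMk q v)) :=
        coeff_mul_congr_right (fun j hj => (key_eq hq0 hq hcv hj).symm)
end

section
/- Quantum exponential relation in the doubly-laced case (eq. (g1212), QE, of the paper): let u, v ∈ A, and define c := (u·v − v·u)/(q_s − q_s⁻¹) and d := (q_s⁻¹·c·v − q_s·v·c)/(q − q⁻¹). Assume u·c = q²·c·u, c·d = q²·d·c, d·v = q²·v·d, and (q⁻¹·u·d − q·d·u)/(q − q⁻¹) = c²/(q_s + q_s⁻¹)². Then Ψ_{q_s}^{(1)}(c + v) = Ψ_{q_s}^{(1)}(c) · Ψ_q^{(2)}((q_s + q_s⁻¹)·d) · Ψ_{q_s}^{(1)}(v) in A[[T]]. -/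
/-!
Both sides have constant term `1` and solve the `q`-difference equation
`S(T) = (1 + q_s (c + v) T) S(q T)`, which determines `S` from its constant term because `q` is
not a root of unity. For the left side this is the functional equation
`Ψ_p⁽ᵐ⁾(a) = (1 + p a Tᵐ) Ψ_p⁽ᵐ⁾(p² a)`. For the right side, expand each factor by the same
equation and move `q_s v T` to the front. Moving it past `Ψ_{q_s}⁽¹⁾(c)` is the only step that is
not a plain `q`-commutation: since `c v = q v c + q_s (q - q⁻¹) d` and `c d = q² d c`, one has
`cⁿ⁺¹ v = qⁿ⁺¹ v cⁿ⁺¹ + (scalar) d cⁿ`, which produces an extra term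
`-q (q_s + q_s⁻¹) d T² Ψ_{q_s}⁽¹⁾(q² c)`. It cancels against the term coming from the expansion
of the middle factor `Ψ_q⁽²⁾((q_s + q_s⁻¹) d)`.
-/

open PowerSeries Finset

namespace PowerSeries

variable {R : Type*} [Semiring R]

theorem coeff_mul_monomial (φ : R⟦X⟧) (k n : ℕ) (a : R) :
    coeff n (φ * monomial k a) = if k ≤ n then coeff (n - k) φ * a else 0 := by
  rw [monomial_eq_C_mul_X_pow, ← mul_assoc, coeff_mul_X_pow']
  split_ifs <;> simp

theorem coeff_monomial_mul (φ : R⟦X⟧) (k n : ℕ) (a : R) :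
    coeff n (monomial k a * φ) = if k ≤ n then a * coeff (n - k) φ else 0 := by
  rw [monomial_eq_C_mul_X_pow, mul_assoc, coeff_C_mul, coeff_X_pow_mul']
  split_ifs <;> simp

end PowerSeries

section Dilate

variable {K : Type*} [CommSemiring K] {A : Type*} [Semiring A] [Algebra K A]

/-- `f(T) ↦ f(r T)`; `PowerSeries.rescale` needs commutative coefficients. -/
noncomputable def dilate (r : K) (f : A⟦X⟧) : A⟦X⟧ :=
  mk fun n => r ^ n • coeff n f

theorem coeff_dilate (r : K) (f : A⟦X⟧) (n : ℕ) : coeff n (dilate r f) = r ^ n • coeff n f :=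
  coeff_mk _ _

theorem dilate_mul (r : K) (f g : A⟦X⟧) : dilate r (f * g) = dilate r f * dilate r g := by
  ext n
  simp only [coeff_dilate, coeff_mul, smul_sum]
  refine sum_congr rfl fun x hx => ?_
  rw [smul_mul_smul_comm, ← pow_add, mem_antidiagonal.mp hx]

theorem coeff_succ_of_eq_one_add_monomial_mul_dilate {t : K} {w : A} {S : A⟦X⟧}
    (hS : S = (1 + monomial 1 w) * dilate t S) (n : ℕ) :
    coeff (n + 1) S = t ^ (n + 1) • coeff (n + 1) S + t ^ n • (w * coeff n S) := by
  conv_lhs => rw [hS]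
  rw [add_mul, one_mul, map_add, coeff_monomial_mul, if_pos (by omega), coeff_dilate,
    Nat.add_sub_cancel, coeff_dilate, mul_smul_comm]

end Dilate

theorem eq_of_eq_one_add_monomial_mul_dilate {K : Type*} [Field K] {A : Type*} [Ring A]
    [Algebra K A] {t : K} (ht : ∀ n : ℕ, 1 ≤ n → t ^ n ≠ 1) {w : A} {S₁ S₂ : A⟦X⟧}
    (h₁ : S₁ = (1 + monomial 1 w) * dilate t S₁) (h₂ : S₂ = (1 + monomial 1 w) * dilate t S₂)
    (h₀ : constantCoeff S₁ = constantCoeff S₂) : S₁ = S₂ := by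
  ext n
  induction n with
  | zero => simpa using h₀
  | succ n ih =>
    have key : ∀ S : A⟦X⟧, S = (1 + monomial 1 w) * dilate t S →
        coeff (n + 1) S = (1 - t ^ (n + 1))⁻¹ • t ^ n • (w * coeff n S) := fun S hS => by
      have hne : 1 - t ^ (n + 1) ≠ 0 := sub_ne_zero.mpr (ht (n + 1) (by omega)).symm
      rw [eq_inv_smul_iff₀ hne, sub_smul, one_smul, sub_eq_iff_eq_add',
        ← coeff_succ_of_eq_one_add_monomial_mul_dilate hS]
    rw [key S₁ h₁, key S₂ h₂, ih]

section Psi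

variable {K : Type*} [Field K] {A : Type*} [Ring A] [Algebra K A]

noncomputable def psiCoeff (p : K) (n : ℕ) : K :=
  p ^ (n ^ 2) / ∏ k ∈ Icc 1 n, (1 - p ^ (2 * k))

theorem coeff_Psi (p : K) (m : ℕ) (a : A) (n : ℕ) :
    coeff n (Psi A p m a) = if m ∣ n then psiCoeff p (n / m) • a ^ (n / m) else 0 :=
  coeff_mk _ _

theorem coeff_Psi_at_mul (p : K) {m : ℕ} (hm : 0 < m) (a : A) (j : ℕ) :
    coeff (m * j) (Psi A p m a) = psiCoeff p j • a ^ j := by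
  rw [coeff_Psi, if_pos (dvd_mul_right m j), Nat.mul_div_cancel_left j hm]

theorem coeff_Psi_one (p : K) (a : A) (n : ℕ) :
    coeff n (Psi A p 1 a) = psiCoeff p n • a ^ n := by
  simpa using coeff_Psi_at_mul p one_pos a n

theorem constantCoeff_Psi (p : K) (m : ℕ) (a : A) : constantCoeff (Psi A p m a) = 1 := by
  simp [← coeff_zero_eq_constantCoeff_apply, coeff_Psi, psiCoeff]

theorem one_sub_pow_mul_psiCoeff_succ (p : K) (hp : ∀ n : ℕ, 1 ≤ n → p ^ n ≠ 1) (n : ℕ) :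
    (1 - p ^ (2 * (n + 1))) * psiCoeff p (n + 1) = p ^ (2 * n + 1) * psiCoeff p n := by
  have hprod : ∏ k ∈ Icc 1 n, (1 - p ^ (2 * k)) ≠ 0 := prod_ne_zero_iff.mpr fun k hk =>
    sub_ne_zero.mpr (hp _ (by simp at hk; omega)).symm
  have hlast : 1 - p ^ (2 * (n + 1)) ≠ 0 := sub_ne_zero.mpr (hp _ (by omega)).symm
  rw [psiCoeff, psiCoeff, prod_Icc_succ_top (by omega)]
  field_simp
  ring

theorem Psi_eq_one_add_monomial_mul (p : K) (hp : ∀ n : ℕ, 1 ≤ n → p ^ n ≠ 1) {m : ℕ}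
    (hm : 0 < m) (a : A) :
    Psi A p m a = (1 + monomial m (p • a)) * Psi A p m (p ^ 2 • a) := by
  ext n
  rw [add_mul, one_mul, map_add, coeff_monomial_mul]
  by_cases hdvd : m ∣ n
  · obtain ⟨j, rfl⟩ := hdvd
    cases j with
    | zero => simp [coeff_Psi, psiCoeff, hm.ne']
    | succ i =>
      rw [if_pos (Nat.le_mul_of_pos_right m i.succ_pos), show m * (i + 1) - m = m * i by
        rw [Nat.mul_succ, Nat.add_sub_cancel], coeff_Psi_at_mul p hm, coeff_Psi_at_mul p hm,
        coeff_Psi_at_mul p hm]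
      simp only [smul_pow, mul_smul_comm, smul_mul_assoc, smul_smul, ← pow_succ']
      rw [← add_smul]
      congr 1
      linear_combination one_sub_pow_mul_psiCoeff_succ p hp i
  · have hsub : m ≤ n → ¬ m ∣ n - m := fun h hd =>
      hdvd (by simpa [Nat.sub_add_cancel h] using hd.add (dvd_refl m))
    simp only [coeff_Psi, if_neg hdvd]
    split_ifs with h <;> simp_all

theorem dilate_Psi (r p : K) (m : ℕ) (a : A) : dilate r (Psi A p m a) = Psi A p m (r ^ m • a) := by
  ext n
  rw [coeff_dilate, coeff_Psi, coeff_Psi]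
  split_ifs with hdvd
  · rw [smul_pow, ← pow_mul, Nat.mul_div_cancel' hdvd, smul_comm]
  · rw [smul_zero]

theorem pow_mul_eq_smul_mul_pow {ρ : K} {a z : A} (h : a * z = ρ • (z * a)) (j : ℕ) :
    a ^ j * z = ρ ^ j • (z * a ^ j) := by
  induction j with
  | zero => simp
  | succ j ih =>
    rw [pow_succ, mul_assoc, h, mul_smul_comm, ← mul_assoc, ih, smul_mul_assoc, smul_smul,
      mul_assoc, ← pow_succ, ← pow_succ']

theorem Psi_mul_monomial (p : K) (m k : ℕ) {ρ : K} {a z : A} (h : a * z = ρ • (z * a)) :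
    Psi A p m a * monomial k z = monomial k z * Psi A p m (ρ • a) := by
  ext n
  rw [coeff_mul_monomial, coeff_monomial_mul, coeff_Psi, coeff_Psi]
  split_ifs
  · rw [smul_mul_assoc, pow_mul_eq_smul_mul_pow h, smul_pow]
    simp only [mul_smul_comm]
  all_goals simp

theorem psiCoeff_succ_mul_geom_sum (p : K) (hp0 : p ≠ 0) (hp : ∀ n : ℕ, 1 ≤ n → p ^ n ≠ 1)
    (i : ℕ) :
    psiCoeff p (i + 1) * (p ^ 2 - (p ^ 2)⁻¹) * ∑ j ∈ range (i + 1), (p ^ 2) ^ j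
      = -(p ^ (2 * i) * (p + p⁻¹) * psiCoeff p i) := by
  have hrec := one_sub_pow_mul_psiCoeff_succ p hp i
  have hgeom := geom_sum_mul (p ^ 2) (i + 1)
  rw [← pow_mul] at hgeom
  field_simp
  linear_combination (psiCoeff p (i + 1) * (p ^ 2 + 1)) * hgeom - (p ^ 2 + 1) * hrec

theorem pow_succ_mul_eq_of_mul_eq {t κ : K} {c v d : A}
    (hcv : c * v = t • (v * c) + κ • d) (hcd : c * d = t ^ 2 • (d * c)) (n : ℕ) :
    c ^ (n + 1) * v
      = t ^ (n + 1) • (v * c ^ (n + 1))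
        + (κ * t ^ n * ∑ j ∈ range (n + 1), t ^ j) • (d * c ^ n) := by
  induction n with
  | zero => simpa using hcv
  | succ n ih =>
    calc c ^ (n + 2) * v = c * (c ^ (n + 1) * v) := by rw [← mul_assoc, ← pow_succ']
      _ = t ^ (n + 1) • (c * v * c ^ (n + 1))
            + (κ * t ^ n * ∑ j ∈ range (n + 1), t ^ j) • (c * d * c ^ n) := by
        rw [ih, mul_add, mul_smul_comm, mul_smul_comm, ← mul_assoc, ← mul_assoc]
      _ = _ := by
        rw [hcv, hcd, geom_sum_succ (n := n + 1)]
        simp only [add_mul, smul_mul_assoc, mul_assoc, ← pow_succ']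
        module

theorem Psi_mul_monomial_eq_sub (p : K) (hp0 : p ≠ 0) (hp : ∀ n : ℕ, 1 ≤ n → p ^ n ≠ 1)
    {c v d : A} (hd : d = (p ^ 2 - (p ^ 2)⁻¹)⁻¹ • (p⁻¹ • (c * v) - p • (v * c)))
    (hcd : c * d = (p ^ 2) ^ 2 • (d * c)) :
    Psi A p 1 c * monomial 1 (p • v)
      = monomial 1 (p • v) * Psi A p 1 (p ^ 2 • c)
        - monomial 2 (p ^ 2 • (p + p⁻¹) • d) * Psi A p 1 ((p ^ 2) ^ 2 • c) := by
  have hne : p ^ 2 - (p ^ 2)⁻¹ ≠ 0 := by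
    rw [sub_ne_zero]
    intro h
    apply hp 4 (by norm_num)
    calc p ^ 4 = p ^ 2 * p ^ 2 := by ring
      _ = 1 := by nth_rewrite 2 [h]; exact mul_inv_cancel₀ (pow_ne_zero 2 hp0)
  have hcv : c * v = p ^ 2 • (v * c) + (p * (p ^ 2 - (p ^ 2)⁻¹)) • d := by
    rw [hd, smul_smul, mul_assoc, mul_inv_cancel₀ hne, mul_one, smul_sub, smul_smul,
      mul_inv_cancel₀ hp0, one_smul, smul_smul, ← pow_two]
    abel
  ext n
  rw [map_sub, coeff_mul_monomial, coeff_monomial_mul, coeff_monomial_mul]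
  rcases n with _ | _ | i
  · simp
  · simp [coeff_Psi_one, psiCoeff]
  · simp only [le_add_iff_nonneg_left, zero_le, if_true, Nat.add_sub_cancel, coeff_Psi_one,
      show i + 2 - 2 = i from rfl, smul_pow, smul_mul_assoc, mul_smul_comm, smul_smul]
    rw [pow_succ_mul_eq_of_mul_eq hcv hcd]
    linear_combination (norm := module)
      (p ^ 2 * (p ^ 2) ^ i * psiCoeff_succ_mul_geom_sum p hp0 hp i) • (d * c ^ i)

end Psi

/-- The term `Z * P''` produced by moving `M` past `P` cancels the one produced by expanding `Q`. -/
theorem mul_mul_eq_one_add_add_mul {R : Type*} [Ring R] {P P' P'' Q Q' V V' X M Z : R}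
    (hP : P = (1 + X) * P') (hQ : Q = (1 + Z) * Q') (hV : V = (1 + M) * V')
    (hPZ : P * Z = Z * P'') (hQM : Q * M = M * Q') (hPM : P * M = M * P' - Z * P'') :
    P * Q * V = (1 + (X + M)) * (P' * Q' * V') := by
  have hPQ : P * Q = P * Q' + Z * P'' * Q' := by
    rw [hQ, add_mul, one_mul, mul_add, ← mul_assoc, hPZ]
  calc P * Q * V = P * Q * V' + P * (Q * M) * V' := by rw [hV]; noncomm_ring
    _ = P * Q * V' + P * M * Q' * V' := by rw [hQM]; noncomm_ring
    _ = P * Q' * V' + M * (P' * Q' * V') := by rw [hPM, hPQ]; noncomm_ring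
    _ = (1 + (X + M)) * (P' * Q' * V') := by rw [hP]; noncomm_ring

theorem quantum_exponential_relation_doubly_laced_general
    {K : Type*} [Field K] (qs : K) (hqs0 : qs ≠ 0) (hqs : ∀ n : ℕ, 1 ≤ n → qs ^ n ≠ 1)
    (q : K) (hq : q = qs ^ 2)
    {A : Type*} [Ring A] [Algebra K A]
    (v c d : A)
    (hd : d = (q - q⁻¹)⁻¹ • (qs⁻¹ • (c * v) - qs • (v * c)))
    (hcd : c * d = (q ^ 2) • (d * c))
    (hdv : d * v = (q ^ 2) • (v * d)) :
    Psi A qs 1 (c + v) = Psi A qs 1 c * Psi A q 2 ((qs + qs⁻¹) • d) * Psi A qs 1 v := by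
  subst hq
  have hq_pow : ∀ n : ℕ, 1 ≤ n → (qs ^ 2) ^ n ≠ 1 := fun n hn => by
    rw [← pow_mul]; exact hqs _ (by omega)
  have hc_comm :
      c * (qs ^ 2 • (qs + qs⁻¹) • d) = (qs ^ 2) ^ 2 • (qs ^ 2 • (qs + qs⁻¹) • d * c) := by
    simp only [mul_smul_comm, smul_mul_assoc, hcd]
    module
  have hd_comm : (qs + qs⁻¹) • d * qs • v = (qs ^ 2) ^ 2 • (qs • v * (qs + qs⁻¹) • d) := by
    simp only [mul_smul_comm, smul_mul_assoc, hdv]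
    module
  have hrhs := mul_mul_eq_one_add_add_mul
    (Psi_eq_one_add_monomial_mul qs hqs one_pos c)
    (Psi_eq_one_add_monomial_mul (qs ^ 2) hq_pow two_pos ((qs + qs⁻¹) • d))
    (Psi_eq_one_add_monomial_mul qs hqs one_pos v)
    (Psi_mul_monomial qs 1 2 hc_comm) (Psi_mul_monomial (qs ^ 2) 2 1 hd_comm)
    (Psi_mul_monomial_eq_sub qs hqs0 hqs hd hcd)
  refine eq_of_eq_one_add_monomial_mul_dilate hq_pow (w := qs • (c + v)) ?_ ?_ ?_
  · rw [dilate_Psi, pow_one]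
    exact Psi_eq_one_add_monomial_mul qs hqs one_pos (c + v)
  · rw [dilate_mul, dilate_mul, dilate_Psi, dilate_Psi, dilate_Psi, pow_one, smul_add, map_add]
    exact hrhs
  · simp only [map_mul, constantCoeff_Psi, mul_one]

/-- quantum exponential relation, doubly-laced case: with `q = q_s²`,
`c := (u·v − v·u)/(q_s − q_s⁻¹)` and `d := (q_s⁻¹·c·v − q_s·v·c)/(q − q⁻¹)`,
if `u·c = q²·c·u`, `c·d = q²·d·c`, `d·v = q²·v·d` and
`(q⁻¹·u·d − q·d·u)/(q − q⁻¹) = c²/(q_s + q_s⁻¹)²`, then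
`Ψ_{q_s}⁽¹⁾(c + v) = Ψ_{q_s}⁽¹⁾(c)·Ψ_q⁽²⁾((q_s + q_s⁻¹)·d)·Ψ_{q_s}⁽¹⁾(v)`. -/
theorem quantum_exponential_relation_doubly_laced
    {K : Type*} [Field K] (qs : K) (hqs0 : qs ≠ 0) (hqs : ∀ n : ℕ, 1 ≤ n → qs ^ n ≠ 1)
    (q : K) (hq : q = qs ^ 2)
    {A : Type*} [Ring A] [Algebra K A]
    (u v c d : A)
    (hc : c = (qs - qs⁻¹)⁻¹ • (u * v - v * u))
    (hd : d = (q - q⁻¹)⁻¹ • (qs⁻¹ • (c * v) - qs • (v * c)))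
    (huc : u * c = (q ^ 2) • (c * u))
    (hcd : c * d = (q ^ 2) • (d * c))
    (hdv : d * v = (q ^ 2) • (v * d))
    (hud : (q - q⁻¹)⁻¹ • (q⁻¹ • (u * d) - q • (d * u)) = ((qs + qs⁻¹) ^ 2)⁻¹ • c ^ 2) :
    Psi A qs 1 (c + v) = Psi A qs 1 c * Psi A q 2 ((qs + qs⁻¹) • d) * Psi A qs 1 v :=
  quantum_exponential_relation_doubly_laced_general qs hqs0 hqs q hq v c d hd hcd hdv
end

section
/- Type B₂ quantum root-vector relations (used in the paper's proof of Lemma 11.4(2), change of words (ijij) ↔ (jiji) with i short and j long): suppose E_i, E_j ∈ A satisfy the type-B₂ quantum Serre relations E_i³·E_j − [3]_{q_s}·E_i²·E_j·E_i + [3]_{q_s}·E_i·E_j·E_i² − E_j·E_i³ = 0 and E_j²·E_i − (q + q⁻¹)·E_j·E_i·E_j + E_i·E_j² = 0, where [3]_{q_s} := q_s² + 1 + q_s⁻². Define the non-simple quantum root vectors E_Y := (q_s·E_j·E_i − q_s⁻¹·E_i·E_j)/(q − q⁻¹) and E_X := (E_Y·E_i − E_i·E_Y)/(q_s − q_s⁻¹).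 Then: E_Y·E_X = q·E_X·E_Y; E_X·E_i = q·E_i·E_X; E_j·E_Y = q·E_Y·E_j; and E_j·E_X − E_X·E_j = (q − q⁻¹)·E_Y². -/
/-!
Clear the denominators: with `Y := q_s E_j E_i - q_s⁻¹ E_i E_j = (q - q⁻¹) E_Y` and
`X := Y E_i - E_i Y = (q - q⁻¹)(q_s - q_s⁻¹) E_X`, the defect of each of the four relations
is, identically in the free algebra on `E_i, E_j`, a combination of the two Serre elements
multiplied on the left and right by `E_i` and `E_j`, so it vanishes under the Serre relations.
Rescaling by the nonzero factors `q - q⁻¹` and `q_s - q_s⁻¹` gives the relations for `E_Y, E_X`.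
-/

namespace TypeB2

variable {𝕜 : Type*} [Field 𝕜] {A : Type*} [Ring A] [Algebra 𝕜 A]

def serreShort (qs : 𝕜) (Ei Ej : A) : A :=
  Ei ^ 3 * Ej - (qs ^ 2 + 1 + qs⁻¹ ^ 2) • (Ei ^ 2 * Ej * Ei)
    + (qs ^ 2 + 1 + qs⁻¹ ^ 2) • (Ei * Ej * Ei ^ 2) - Ej * Ei ^ 3

def serreLong (q : 𝕜) (Ei Ej : A) : A :=
  Ej ^ 2 * Ei - (q + q⁻¹) • (Ej * Ei * Ej) + Ei * Ej ^ 2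

def rootY (qs : 𝕜) (Ei Ej : A) : A := qs • (Ej * Ei) - qs⁻¹ • (Ei * Ej)

def rootX (qs : 𝕜) (Ei Ej : A) : A := rootY qs Ei Ej * Ei - Ei * rootY qs Ei Ej

variable {qs : 𝕜} {Ei Ej : A}

theorem rootX_eq :
    rootX qs Ei Ej = qs • (Ej * Ei ^ 2) - (qs + qs⁻¹) • (Ei * Ej * Ei) + qs⁻¹ • (Ei ^ 2 * Ej) := by
  simp only [rootX, rootY, sub_mul, mul_sub, smul_mul_assoc, mul_smul_comm, mul_assoc, pow_two]
  match_scalars <;> ring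

theorem mul_rootY_sub (hqs : qs ≠ 0) :
    Ej * rootY qs Ei Ej - qs ^ 2 • (rootY qs Ei Ej * Ej) = qs • serreLong (qs ^ 2) Ei Ej := by
  simp only [rootY, serreLong, sub_mul, mul_sub, mul_add, smul_mul_assoc, mul_smul_comm,
    smul_sub, smul_add, smul_smul, mul_assoc, pow_two]
  match_scalars <;> field_simp <;> ring

theorem rootX_mul_sub (hqs : qs ≠ 0) :
    rootX qs Ei Ej * Ei - qs ^ 2 • (Ei * rootX qs Ei Ej) = (-qs) • serreShort qs Ei Ej := by
  rw [rootX_eq]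
  simp only [serreShort, sub_mul, mul_sub, add_mul, mul_add, smul_mul_assoc, mul_smul_comm,
    smul_sub, smul_add, smul_smul, mul_assoc, pow_succ, pow_zero, one_mul]
  match_scalars <;> field_simp <;> ring

theorem commutator_rootX_sub (hqs : qs ≠ 0) :
    Ej * rootX qs Ei Ej - rootX qs Ei Ej * Ej - (qs - qs⁻¹) • rootY qs Ei Ej ^ 2
      = qs • (serreLong (qs ^ 2) Ei Ej * Ei) - qs⁻¹ • (Ei * serreLong (qs ^ 2) Ei Ej) := by
  rw [rootX_eq]
  simp only [rootY, serreLong, sub_mul, mul_sub, add_mul, mul_add, smul_mul_assoc, mul_smul_comm,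
    smul_sub, smul_add, smul_smul, mul_assoc, pow_succ, pow_zero, one_mul]
  match_scalars <;> field_simp <;> ring

theorem rootY_mul_rootX_sub (hqs : qs ≠ 0) :
    rootY qs Ei Ej * rootX qs Ei Ej - qs ^ 2 • (rootX qs Ei Ej * rootY qs Ei Ej)
      = qs ^ 2 • (Ej * serreShort qs Ei Ej) - serreShort qs Ei Ej * Ej
        + qs ^ 2 • (serreLong (qs ^ 2) Ei Ej * Ei ^ 2)
        - (1 + qs ^ 2) • (Ei * serreLong (qs ^ 2) Ei Ej * Ei)
        + Ei ^ 2 * serreLong (qs ^ 2) Ei Ej := by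
  rw [rootX_eq]
  simp only [rootY, serreShort, serreLong, sub_mul, mul_sub, add_mul, mul_add, smul_mul_assoc,
    mul_smul_comm, smul_sub, smul_add, smul_smul, mul_assoc, pow_succ, pow_zero, one_mul]
  match_scalars <;> field_simp <;> ring

theorem mul_rootY (hqs : qs ≠ 0) (hL : serreLong (qs ^ 2) Ei Ej = 0) :
    Ej * rootY qs Ei Ej = qs ^ 2 • (rootY qs Ei Ej * Ej) :=
  sub_eq_zero.mp <| by rw [mul_rootY_sub hqs, hL, smul_zero]

theorem rootX_mul (hqs : qs ≠ 0) (hS : serreShort qs Ei Ej = 0) :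
    rootX qs Ei Ej * Ei = qs ^ 2 • (Ei * rootX qs Ei Ej) :=
  sub_eq_zero.mp <| by rw [rootX_mul_sub hqs, hS, smul_zero]

theorem commutator_rootX (hqs : qs ≠ 0) (hL : serreLong (qs ^ 2) Ei Ej = 0) :
    Ej * rootX qs Ei Ej - rootX qs Ei Ej * Ej = (qs - qs⁻¹) • rootY qs Ei Ej ^ 2 :=
  sub_eq_zero.mp <| by rw [commutator_rootX_sub hqs, hL]; simp

theorem rootY_mul_rootX (hqs : qs ≠ 0) (hS : serreShort qs Ei Ej = 0)
    (hL : serreLong (qs ^ 2) Ei Ej = 0) :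
    rootY qs Ei Ej * rootX qs Ei Ej = qs ^ 2 • (rootX qs Ei Ej * rootY qs Ei Ej) :=
  sub_eq_zero.mp <| by rw [rootY_mul_rootX_sub hqs, hS, hL]; simp

theorem smul_mul_smul_of_mul_eq_smul {x y : A} {c : 𝕜} (h : x * y = c • (y * x)) (r s : 𝕜) :
    (r • x) * (s • y) = c • ((s • y) * (r • x)) := by
  rw [smul_mul_smul_comm, smul_mul_smul_comm, h, smul_comm, mul_comm s]

theorem sub_inv_ne_zero {x : 𝕜} (hx : x ≠ 0) (hx2 : x ^ 2 ≠ 1) : x - x⁻¹ ≠ 0 := by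
  intro h
  apply hx2
  rw [sq]
  nth_rw 2 [sub_eq_zero.mp h]
  exact mul_inv_cancel₀ hx

end TypeB2

open TypeB2 in
/-- type B₂ quantum root-vector relations, `E_i` short, `E_j` long,
`q = q_s²`: under the type-B₂ quantum Serre relations, the non-simple quantum root
vectors `E_Y := (q_s·E_j·E_i − q_s⁻¹·E_i·E_j)/(q − q⁻¹)` and
`E_X := (E_Y·E_i − E_i·E_Y)/(q_s − q_s⁻¹)` satisfy
`E_Y·E_X = q·E_X·E_Y`, `E_X·E_i = q·E_i·E_X`, `E_j·E_Y = q·E_Y·E_j` and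
`E_j·E_X − E_X·E_j = (q − q⁻¹)·E_Y²`. -/
theorem typeB2_root_vector_relations
    {𝕜 : Type*} [Field 𝕜] (qs : 𝕜) (hqs0 : qs ≠ 0) (hqs : ∀ n : ℕ, 1 ≤ n → qs ^ n ≠ 1)
    (q : 𝕜) (hq : q = qs ^ 2)
    {A : Type*} [Ring A] [Algebra 𝕜 A]
    (Ei Ej EY EX : A)
    (hSerre1 : Ei ^ 3 * Ej - (qs ^ 2 + 1 + qs⁻¹ ^ 2) • (Ei ^ 2 * Ej * Ei)
        + (qs ^ 2 + 1 + qs⁻¹ ^ 2) • (Ei * Ej * Ei ^ 2) - Ej * Ei ^ 3 = 0)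
    (hSerre2 : Ej ^ 2 * Ei - (q + q⁻¹) • (Ej * Ei * Ej) + Ei * Ej ^ 2 = 0)
    (hEY : EY = (q - q⁻¹)⁻¹ • (qs • (Ej * Ei) - qs⁻¹ • (Ei * Ej)))
    (hEX : EX = (qs - qs⁻¹)⁻¹ • (EY * Ei - Ei * EY)) :
    EY * EX = q • (EX * EY) ∧ EX * Ei = q • (Ei * EX) ∧ Ej * EY = q • (EY * Ej) ∧
      Ej * EX - EX * Ej = (q - q⁻¹) • EY ^ 2 := by
  subst hq
  have hS : serreShort qs Ei Ej = 0 := hSerre1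
  have hL : serreLong (qs ^ 2) Ei Ej = 0 := hSerre2
  set a := qs ^ 2 - (qs ^ 2)⁻¹
  have hY : EY = a⁻¹ • rootY qs Ei Ej := hEY
  have hX : EX = ((qs - qs⁻¹)⁻¹ * a⁻¹) • rootX qs Ei Ej := by
    rw [hEX, hY, smul_mul_assoc, mul_smul_comm, ← smul_sub, smul_smul]; rfl
  refine ⟨?_, ?_, ?_, ?_⟩
  · rw [hY, hX]
    exact smul_mul_smul_of_mul_eq_smul (rootY_mul_rootX hqs0 hS hL) _ _
  · rw [hX, smul_mul_assoc, rootX_mul hqs0 hS, mul_smul_comm, smul_comm]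
  · rw [hY, smul_mul_assoc, mul_smul_comm, mul_rootY hqs0 hL, smul_comm]
  · have hb : qs - qs⁻¹ ≠ 0 := sub_inv_ne_zero hqs0 (hqs 2 one_le_two)
    have ha : a ≠ 0 :=
      sub_inv_ne_zero (pow_ne_zero 2 hqs0) (by rw [← pow_mul]; exact hqs 4 (by norm_num))
    rw [hX, hY, smul_mul_assoc, mul_smul_comm, ← smul_sub, commutator_rootX hqs0 hL, smul_pow,
      smul_smul, smul_smul]
    congr 1
    rw [mul_right_comm, inv_mul_cancel₀ hb, one_mul, sq, ← mul_assoc, mul_inv_cancel₀ ha, one_mul]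
end

section
/- Positive representation of U_q(sl₃) in a quantum torus algebra (the paper's Proposition 5.1 for the reduced word (1,2,1), with the spectral parameters relabeled consistently): in H, set e₁ := e(w − 2p_w) + e(−w − 2p_w); e₂ := e(u − 2p_u − 2p_v + 2p_w) + e(v − w − 2p_v) + e(−v + w − 2p_v) + e(−u − 2p_u − 2p_v + 2p_w); f₁ := e(−2u + v − w − 2λ₁ + 2p_w) + e(−u − 2λ₁ + 2p_u) + e(u + 2λ₁ + 2p_u) + e(2u − v + w + 2λ₁ + 2p_w); f₂ := e(u − v − 2λ₂ + 2p_v) + e(−u + v + 2λ₂ + 2p_v); K₁ := e(−2u + v − 2w − 2λ₁); K₂ := e(u − 2v + w − 2λ₂). Then these elements satisfy all defining relations of the quantum group U_q(sl₃) with rescaled generators, namely: K₁ and K₂ are invertible and commute; K_i·e_j = q^{a_{ij}}·e_j·K_i and K_i·f_j = q^{−a_{ij}}·f_j·K_i for i, j ∈ {1,2}, where a₁₁ = a₂₂ = 2 and a₁₂ = a₂₁ = −1; e_i·f_j − f_j·e_i = 0 for i ≠ j; e_i·f_i − f_i·e_i = (q − q⁻¹)(K_i⁻¹ − K_i) for i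 ∈ {1,2}; and the quantum Serre relations e_i²·e_j − (q + q⁻¹)·e_i·e_j·e_i + e_j·e_i² = 0 and f_i²·f_j − (q + q⁻¹)·f_i·f_j·f_i + f_j·f_i² = 0 for i ≠ j. Consequently the assignment E_i ↦ e_i, F_i ↦ f_i, K_i^{±1} ↦ K_i^{±1} defines a K-algebra homomorphism from U_q(sl₃) (with rescaled generators) to H. -/
/-!
In the quantum torus the Weyl-ordered monomials multiply by
`e(α) e(α') = t ^ ω(α, α') e(α + α')`, where `t = q^{1/2}` and
`ω(α, α') = Σᵢ (aᵢ b'ᵢ - bᵢ a'ᵢ)` pairs the `u`-exponents `aᵢ` with the `p`-exponents `bᵢ`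
(`QuantumTorusGenerators.mon_mul`). Hence each `K_i` is a unit with inverse `e(-α)`, and every
defining relation of `U_q(sl₃)` becomes an identity between finite sums of monomials with
coefficients Laurent monomials in `t`, which holds after expanding both sides. The homomorphism
out of `U_q(sl₃)` is then the universal property of the presentation.
-/

noncomputable section

/-- Generator `i` of the free algebra on 8 generators; the indexing convention is
`0 ↦ E₁`, `1 ↦ E₂`, `2 ↦ F₁`, `3 ↦ F₂`, `4 ↦ K₁`, `5 ↦ K₁⁻¹`, `6 ↦ K₂`, `7 ↦ K₂⁻¹`. -/
def gg (𝕜 : Type*) [Field 𝕜] (i : Fin 8) : FreeAlgebra 𝕜 (Fin 8) := FreeAlgebra.ι 𝕜 i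

/-- The defining relations of the quantum group `U_q(sl₃)` with rescaled generators
`e_i, f_i, K_i^{±1}` (Cartan matrix `a₁₁ = a₂₂ = 2`, `a₁₂ = a₂₁ = −1`, and
`e_i f_i − f_i e_i = (q − q⁻¹)(K_i⁻¹ − K_i)`). -/
inductive Sl3Rel (𝕜 : Type*) [Field 𝕜] (q : 𝕜) :
    FreeAlgebra 𝕜 (Fin 8) → FreeAlgebra 𝕜 (Fin 8) → Prop
  | K1inv_right : Sl3Rel 𝕜 q (gg 𝕜 4 * gg 𝕜 5) 1
  | K1inv_left : Sl3Rel 𝕜 q (gg 𝕜 5 * gg 𝕜 4) 1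
  | K2inv_right : Sl3Rel 𝕜 q (gg 𝕜 6 * gg 𝕜 7) 1
  | K2inv_left : Sl3Rel 𝕜 q (gg 𝕜 7 * gg 𝕜 6) 1
  | K1K2 : Sl3Rel 𝕜 q (gg 𝕜 4 * gg 𝕜 6) (gg 𝕜 6 * gg 𝕜 4)
  | K1E1 : Sl3Rel 𝕜 q (gg 𝕜 4 * gg 𝕜 0) ((q ^ 2) • (gg 𝕜 0 * gg 𝕜 4))
  | K1E2 : Sl3Rel 𝕜 q (gg 𝕜 4 * gg 𝕜 1) (q⁻¹ • (gg 𝕜 1 * gg 𝕜 4))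
  | K2E1 : Sl3Rel 𝕜 q (gg 𝕜 6 * gg 𝕜 0) (q⁻¹ • (gg 𝕜 0 * gg 𝕜 6))
  | K2E2 : Sl3Rel 𝕜 q (gg 𝕜 6 * gg 𝕜 1) ((q ^ 2) • (gg 𝕜 1 * gg 𝕜 6))
  | K1F1 : Sl3Rel 𝕜 q (gg 𝕜 4 * gg 𝕜 2) (((q ^ 2)⁻¹) • (gg 𝕜 2 * gg 𝕜 4))
  | K1F2 : Sl3Rel 𝕜 q (gg 𝕜 4 * gg 𝕜 3) (q • (gg 𝕜 3 * gg 𝕜 4))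
  | K2F1 : Sl3Rel 𝕜 q (gg 𝕜 6 * gg 𝕜 2) (q • (gg 𝕜 2 * gg 𝕜 6))
  | K2F2 : Sl3Rel 𝕜 q (gg 𝕜 6 * gg 𝕜 3) (((q ^ 2)⁻¹) • (gg 𝕜 3 * gg 𝕜 6))
  | E1F2 : Sl3Rel 𝕜 q (gg 𝕜 0 * gg 𝕜 3) (gg 𝕜 3 * gg 𝕜 0)
  | E2F1 : Sl3Rel 𝕜 q (gg 𝕜 1 * gg 𝕜 2) (gg 𝕜 2 * gg 𝕜 1)
  | E1F1 : Sl3Rel 𝕜 q (gg 𝕜 0 * gg 𝕜 2 - gg 𝕜 2 * gg 𝕜 0) ((q - q⁻¹) • (gg 𝕜 5 - gg 𝕜 4))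
  | E2F2 : Sl3Rel 𝕜 q (gg 𝕜 1 * gg 𝕜 3 - gg 𝕜 3 * gg 𝕜 1) ((q - q⁻¹) • (gg 𝕜 7 - gg 𝕜 6))
  | SerreE12 : Sl3Rel 𝕜 q
      (gg 𝕜 0 ^ 2 * gg 𝕜 1 - (q + q⁻¹) • (gg 𝕜 0 * gg 𝕜 1 * gg 𝕜 0) + gg 𝕜 1 * gg 𝕜 0 ^ 2) 0
  | SerreE21 : Sl3Rel 𝕜 q
      (gg 𝕜 1 ^ 2 * gg 𝕜 0 - (q + q⁻¹) • (gg 𝕜 1 * gg 𝕜 0 * gg 𝕜 1) + gg 𝕜 0 * gg 𝕜 1 ^ 2) 0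
  | SerreF12 : Sl3Rel 𝕜 q
      (gg 𝕜 2 ^ 2 * gg 𝕜 3 - (q + q⁻¹) • (gg 𝕜 2 * gg 𝕜 3 * gg 𝕜 2) + gg 𝕜 3 * gg 𝕜 2 ^ 2) 0
  | SerreF21 : Sl3Rel 𝕜 q
      (gg 𝕜 3 ^ 2 * gg 𝕜 2 - (q + q⁻¹) • (gg 𝕜 3 * gg 𝕜 2 * gg 𝕜 3) + gg 𝕜 2 * gg 𝕜 3 ^ 2) 0

/-- The quantum group `U_q(sl₃)` (with rescaled generators), presented by generators
and relations. -/
def UqSl3 (𝕜 : Type*) [Field 𝕜] (q : 𝕜) : Type _ := RingQuot (Sl3Rel 𝕜 q)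

instance (𝕜 : Type*) [Field 𝕜] (q : 𝕜) : Ring (UqSl3 𝕜 q) := by unfold UqSl3; infer_instance
instance (𝕜 : Type*) [Field 𝕜] (q : 𝕜) : Algebra 𝕜 (UqSl3 𝕜 q) := by unfold UqSl3; infer_instance

/-- The image of generator `i` in `U_q(sl₃)`. -/
def UqSl3.gen (𝕜 : Type*) [Field 𝕜] (q : 𝕜) (i : Fin 8) : UqSl3 𝕜 q :=
  RingQuot.mkAlgHom 𝕜 (Sl3Rel 𝕜 q) (gg 𝕜 i)

variable {𝕜 : Type*} [Field 𝕜] {H : Type*} [Ring H] [Algebra 𝕜 H]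

/-- The normalized (Weyl-ordered) monomial
`e(αu·u + αv·v + αw·w + 2βu·pu + 2βv·pv + 2βw·pw + γ₁λ₁ + γ₂λ₂)
  = t^{−(αuβu + αvβv + αwβw)} · U^{αu} V^{αv} W^{αw} Pu^{βu} Pv^{βv} Pw^{βw} L₁^{γ₁} L₂^{γ₂}`
in the quantum torus algebra `H`, where `t = q^{1/2}`. -/
def emon (t : 𝕜) (U V W Pu Pv Pw L1 L2 : Hˣ)
    (au av aw bu bv bw g1 g2 : ℤ) : H :=
  t ^ (-(au * bu + av * bv + aw * bw)) •
    ((U ^ au * V ^ av * W ^ aw * Pu ^ bu * Pv ^ bv * Pw ^ bw * L1 ^ g1 * L2 ^ g2 : Hˣ) : H)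

section QCommute

variable {G : Type*} [Group G] {c u p : G}

theorem zpow_mul_zpow_eq_of_mul_eq (hc : ∀ x, Commute c x) (h : u * p = c * (p * u))
    (a b : ℤ) : p ^ b * u ^ a = c ^ (-(a * b)) * (u ^ a * p ^ b) := by
  have hp : SemiconjBy u (p ^ b) (c ^ b * p ^ b) := by
    rw [← (hc p).mul_zpow]
    exact SemiconjBy.zpow_right (by rw [SemiconjBy, h, mul_assoc]) b
  have hu : SemiconjBy (p ^ b) u (c ^ (-b) * u) := by
    rw [SemiconjBy, mul_assoc, hp.eq, ← mul_assoc, ← mul_assoc, ← zpow_add, neg_add_cancel,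
      zpow_zero, one_mul]
  rw [(hu.zpow_right a).eq, ((hc u).zpow_left _).mul_zpow, ← zpow_mul, mul_assoc, neg_mul,
    mul_comm]

theorem zpow_mul_zpow_mul_zpow_mul_zpow (hc : ∀ x, Commute c x) (h : u * p = c * (p * u))
    (a b a' b' : ℤ) :
    u ^ a * p ^ b * (u ^ a' * p ^ b') = c ^ (-(b * a')) * (u ^ (a + a') * p ^ (b + b')) := by
  rw [mul_assoc, ← mul_assoc (p ^ b), zpow_mul_zpow_eq_of_mul_eq hc h, mul_comm a' b,
    mul_assoc, ((hc _).zpow_left _).symm.left_comm, zpow_add, zpow_add]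
  simp only [mul_assoc]

theorem Commute.zpow_mul_zpow {u' p' : G} (huu : Commute u u') (hup : Commute u p')
    (hpu : Commute p u') (hpp : Commute p p') (a b a' b' : ℤ) :
    Commute (u ^ a * p ^ b) (u' ^ a' * p' ^ b') :=
  ((huu.zpow_zpow a a').mul_right (hup.zpow_zpow a b')).mul_left
    ((hpu.zpow_zpow b a').mul_right (hpp.zpow_zpow b b'))

end QCommute

def UqSl3Relations (q : 𝕜) (e₁ e₂ f₁ f₂ K₁ K₂ : H) : Prop :=
  IsUnit K₁ ∧ IsUnit K₂ ∧ K₁ * K₂ = K₂ * K₁ ∧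
  K₁ * e₁ = (q ^ 2) • (e₁ * K₁) ∧ K₁ * e₂ = q⁻¹ • (e₂ * K₁) ∧
  K₂ * e₁ = q⁻¹ • (e₁ * K₂) ∧ K₂ * e₂ = (q ^ 2) • (e₂ * K₂) ∧
  K₁ * f₁ = ((q ^ 2)⁻¹) • (f₁ * K₁) ∧ K₁ * f₂ = q • (f₂ * K₁) ∧
  K₂ * f₁ = q • (f₁ * K₂) ∧ K₂ * f₂ = ((q ^ 2)⁻¹) • (f₂ * K₂) ∧
  e₁ * f₂ = f₂ * e₁ ∧ e₂ * f₁ = f₁ * e₂ ∧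
  e₁ * f₁ - f₁ * e₁ = (q - q⁻¹) • (Ring.inverse K₁ - K₁) ∧
  e₂ * f₂ - f₂ * e₂ = (q - q⁻¹) • (Ring.inverse K₂ - K₂) ∧
  e₁ ^ 2 * e₂ - (q + q⁻¹) • (e₁ * e₂ * e₁) + e₂ * e₁ ^ 2 = 0 ∧
  e₂ ^ 2 * e₁ - (q + q⁻¹) • (e₂ * e₁ * e₂) + e₁ * e₂ ^ 2 = 0 ∧
  f₁ ^ 2 * f₂ - (q + q⁻¹) • (f₁ * f₂ * f₁) + f₂ * f₁ ^ 2 = 0 ∧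
  f₂ ^ 2 * f₁ - (q + q⁻¹) • (f₂ * f₁ * f₂) + f₁ * f₂ ^ 2 = 0

theorem UqSl3Relations.exists_algHom {q : 𝕜} {e₁ e₂ f₁ f₂ K₁ K₂ : H}
    (h : UqSl3Relations q e₁ e₂ f₁ f₂ K₁ K₂) :
    ∃ φ : UqSl3 𝕜 q →ₐ[𝕜] H,
      φ (UqSl3.gen 𝕜 q 0) = e₁ ∧ φ (UqSl3.gen 𝕜 q 1) = e₂ ∧
      φ (UqSl3.gen 𝕜 q 2) = f₁ ∧ φ (UqSl3.gen 𝕜 q 3) = f₂ ∧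
      φ (UqSl3.gen 𝕜 q 4) = K₁ ∧ φ (UqSl3.gen 𝕜 q 5) = Ring.inverse K₁ ∧
      φ (UqSl3.gen 𝕜 q 6) = K₂ ∧ φ (UqSl3.gen 𝕜 q 7) = Ring.inverse K₂ := by
  obtain ⟨hK₁, hK₂, rels⟩ := h
  let x : Fin 8 → H := ![e₁, e₂, f₁, f₂, K₁, Ring.inverse K₁, K₂, Ring.inverse K₂]
  have hx : ∀ ⦃a b⦄, Sl3Rel 𝕜 q a b → FreeAlgebra.lift 𝕜 x a = FreeAlgebra.lift 𝕜 x b := by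
    intro a b hab
    induction hab <;>
      simp only [x, gg, map_mul, map_sub, map_add, map_smul, map_pow, map_one, map_zero,
        FreeAlgebra.lift_ι_apply, Matrix.cons_val, Ring.mul_inverse_cancel _ hK₁,
        Ring.inverse_mul_cancel _ hK₁, Ring.mul_inverse_cancel _ hK₂,
        Ring.inverse_mul_cancel _ hK₂] <;>
      tauto
  let φ : UqSl3 𝕜 q →ₐ[𝕜] H := RingQuot.liftAlgHom 𝕜 ⟨FreeAlgebra.lift 𝕜 x, hx⟩
  have φ_gen (i : Fin 8) : φ (UqSl3.gen 𝕜 q i) = x i :=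
    (RingQuot.liftAlgHom_mkAlgHom_apply 𝕜 _ _ _).trans (FreeAlgebra.lift_ι_apply _ _)
  exact ⟨φ, φ_gen 0, φ_gen 1, φ_gen 2, φ_gen 3, φ_gen 4, φ_gen 5, φ_gen 6, φ_gen 7⟩

structure QuantumTorusGenerators (𝕜 H : Type*) [Field 𝕜] [Ring H] [Algebra 𝕜 H] where
  t : 𝕜
  U : Hˣ
  V : Hˣ
  W : Hˣ
  Pu : Hˣ
  Pv : Hˣ
  Pw : Hˣ
  L1 : Hˣ
  L2 : Hˣ
  t_ne_zero : t ≠ 0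
  U_mul_Pu : (U : H) * Pu = (t ^ 2) • ((Pu : H) * U)
  V_mul_Pv : (V : H) * Pv = (t ^ 2) • ((Pv : H) * V)
  W_mul_Pw : (W : H) * Pw = (t ^ 2) • ((Pw : H) * W)
  commute_U_V : Commute (U : H) (V : H)
  commute_U_W : Commute (U : H) (W : H)
  commute_U_Pv : Commute (U : H) (Pv : H)
  commute_U_Pw : Commute (U : H) (Pw : H)
  commute_U_L1 : Commute (U : H) (L1 : H)
  commute_U_L2 : Commute (U : H) (L2 : H)
  commute_V_W : Commute (V : H) (W : H)
  commute_V_Pu : Commute (V : H) (Pu : H)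
  commute_V_Pw : Commute (V : H) (Pw : H)
  commute_V_L1 : Commute (V : H) (L1 : H)
  commute_V_L2 : Commute (V : H) (L2 : H)
  commute_W_Pu : Commute (W : H) (Pu : H)
  commute_W_Pv : Commute (W : H) (Pv : H)
  commute_W_L1 : Commute (W : H) (L1 : H)
  commute_W_L2 : Commute (W : H) (L2 : H)
  commute_Pu_Pv : Commute (Pu : H) (Pv : H)
  commute_Pu_Pw : Commute (Pu : H) (Pw : H)
  commute_Pu_L1 : Commute (Pu : H) (L1 : H)
  commute_Pu_L2 : Commute (Pu : H) (L2 : H)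
  commute_Pv_Pw : Commute (Pv : H) (Pw : H)
  commute_Pv_L1 : Commute (Pv : H) (L1 : H)
  commute_Pv_L2 : Commute (Pv : H) (L2 : H)
  commute_Pw_L1 : Commute (Pw : H) (L1 : H)
  commute_Pw_L2 : Commute (Pw : H) (L2 : H)
  commute_L1_L2 : Commute (L1 : H) (L2 : H)

namespace QuantumTorusGenerators

variable (X : QuantumTorusGenerators 𝕜 H)

def tUnit : Hˣ := Units.map (algebraMap 𝕜 H : 𝕜 →* H) (Units.mk0 X.t X.t_ne_zero)

theorem val_tUnit_zpow_mul (n : ℤ) (x : Hˣ) :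
    ((X.tUnit ^ n * x : Hˣ) : H) = X.t ^ n • (x : H) := by
  rw [Algebra.smul_def, Units.val_mul, tUnit, ← map_zpow, Units.coe_map, MonoidHom.coe_coe,
    Units.val_zpow_eq_zpow_val, Units.val_mk0]

theorem commute_tUnit (x : Hˣ) : Commute X.tUnit x :=
  Commute.units_val_iff.mp (Algebra.commutes _ _)

theorem mul_eq_tUnit_sq_mul {x y : Hˣ} (h : (x : H) * y = (X.t ^ 2) • ((y : H) * x)) :
    x * y = X.tUnit ^ 2 * (y * x) := by
  ext
  rw [Units.val_mul, h, ← zpow_natCast X.tUnit, val_tUnit_zpow_mul, zpow_natCast, Units.val_mul]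

def unitMon (au av aw bu bv bw g1 g2 : ℤ) : Hˣ :=
  X.U ^ au * X.V ^ av * X.W ^ aw * X.Pu ^ bu * X.Pv ^ bv * X.Pw ^ bw * X.L1 ^ g1 * X.L2 ^ g2

theorem unitMon_eq_pairs (au av aw bu bv bw g1 g2 : ℤ) :
    X.unitMon au av aw bu bv bw g1 g2 =
      X.U ^ au * X.Pu ^ bu *
        (X.V ^ av * X.Pv ^ bv * (X.W ^ aw * X.Pw ^ bw * (X.L1 ^ g1 * X.L2 ^ g2))) := by
  simp only [unitMon, mul_assoc]
  rw [((Commute.units_val_iff.mp X.commute_W_Pu).zpow_zpow aw bu).left_comm,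
    ((Commute.units_val_iff.mp X.commute_V_Pu).zpow_zpow av bu).left_comm,
    ((Commute.units_val_iff.mp X.commute_W_Pv).zpow_zpow aw bv).left_comm]

theorem unitMon_mul (au av aw bu bv bw g1 g2 au' av' aw' bu' bv' bw' g1' g2' : ℤ) :
    X.unitMon au av aw bu bv bw g1 g2 * X.unitMon au' av' aw' bu' bv' bw' g1' g2' =
      (X.tUnit ^ 2) ^ (-(bu * au' + bv * av' + bw * aw')) *
        X.unitMon (au + au') (av + av') (aw + aw') (bu + bu') (bv + bv') (bw + bw')
          (g1 + g1') (g2 + g2') := by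
  have hc {x y : Hˣ} (h : Commute (x : H) y) : Commute x y := Commute.units_val_iff.mp h
  have htUnit := fun x => (X.commute_tUnit x).pow_left 2
  have block₁ : Commute (X.V ^ av * X.Pv ^ bv * (X.W ^ aw * X.Pw ^ bw * (X.L1 ^ g1 * X.L2 ^ g2)))
      (X.U ^ au' * X.Pu ^ bu') :=
    ((hc X.commute_U_V).symm.zpow_mul_zpow (hc X.commute_V_Pu) (hc X.commute_U_Pv).symm
      (hc X.commute_Pu_Pv).symm _ _ _ _).mul_left
    (((hc X.commute_U_W).symm.zpow_mul_zpow (hc X.commute_W_Pu) (hc X.commute_U_Pw).symm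
      (hc X.commute_Pu_Pw).symm _ _ _ _).mul_left
    ((hc X.commute_U_L1).symm.zpow_mul_zpow (hc X.commute_Pu_L1).symm (hc X.commute_U_L2).symm
      (hc X.commute_Pu_L2).symm _ _ _ _))
  have block₂ :
      Commute (X.W ^ aw * X.Pw ^ bw * (X.L1 ^ g1 * X.L2 ^ g2)) (X.V ^ av' * X.Pv ^ bv') :=
    ((hc X.commute_V_W).symm.zpow_mul_zpow (hc X.commute_W_Pv) (hc X.commute_V_Pw).symm
      (hc X.commute_Pv_Pw).symm _ _ _ _).mul_left
    ((hc X.commute_V_L1).symm.zpow_mul_zpow (hc X.commute_Pv_L1).symm (hc X.commute_V_L2).symm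
      (hc X.commute_Pv_L2).symm _ _ _ _)
  have block₃ : Commute (X.L1 ^ g1 * X.L2 ^ g2) (X.W ^ aw' * X.Pw ^ bw') :=
    (hc X.commute_W_L1).symm.zpow_mul_zpow (hc X.commute_Pw_L1).symm (hc X.commute_W_L2).symm
      (hc X.commute_Pw_L2).symm _ _ _ _
  have hZ : X.L1 ^ g1 * X.L2 ^ g2 * (X.L1 ^ g1' * X.L2 ^ g2') =
      X.L1 ^ (g1 + g1') * X.L2 ^ (g2 + g2') := by
    rw [((hc X.commute_L1_L2).symm.zpow_zpow g2 g1').mul_mul_mul_comm, ← zpow_add, ← zpow_add]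
  rw [unitMon_eq_pairs, unitMon_eq_pairs, unitMon_eq_pairs, block₁.mul_mul_mul_comm, block₂.mul_mul_mul_comm,
    block₃.mul_mul_mul_comm, hZ,
    zpow_mul_zpow_mul_zpow_mul_zpow htUnit (X.mul_eq_tUnit_sq_mul X.U_mul_Pu),
    zpow_mul_zpow_mul_zpow_mul_zpow htUnit (X.mul_eq_tUnit_sq_mul X.V_mul_Pv),
    zpow_mul_zpow_mul_zpow_mul_zpow htUnit (X.mul_eq_tUnit_sq_mul X.W_mul_Pw),
    mul_assoc ((X.tUnit ^ 2) ^ (-(bw * aw'))), ((htUnit _).zpow_left _).symm.mul_mul_mul_comm,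
    ← zpow_add, ((htUnit _).zpow_left _).symm.mul_mul_mul_comm, ← zpow_add]
  congr 2
  ring

def mon (au av aw bu bv bw g1 g2 : ℤ) : H :=
  emon X.t X.U X.V X.W X.Pu X.Pv X.Pw X.L1 X.L2 au av aw bu bv bw g1 g2

theorem mon_mul (au av aw bu bv bw g1 g2 au' av' aw' bu' bv' bw' g1' g2' : ℤ) :
    X.mon au av aw bu bv bw g1 g2 * X.mon au' av' aw' bu' bv' bw' g1' g2' =
      X.t ^ (au * bu' + av * bv' + aw * bw' - bu * au' - bv * av' - bw * aw') •
        X.mon (au + au') (av + av') (aw + aw') (bu + bu') (bv + bv') (bw + bw')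
          (g1 + g1') (g2 + g2') := by
  simp only [mon, emon]
  rw [smul_mul_smul_comm, ← Units.val_mul, ← unitMon, ← unitMon, unitMon_mul, ← zpow_natCast,
    ← zpow_mul, val_tUnit_zpow_mul, smul_smul, smul_smul, ← zpow_add₀ X.t_ne_zero,
    ← zpow_add₀ X.t_ne_zero, ← zpow_add₀ X.t_ne_zero, unitMon]
  congr 2
  ring

theorem mon_zero : X.mon 0 0 0 0 0 0 0 0 = 1 := by
  simp [mon, emon]

theorem mon_mul_mon_neg (au av aw bu bv bw g1 g2 : ℤ) :
    X.mon au av aw bu bv bw g1 g2 * X.mon (-au) (-av) (-aw) (-bu) (-bv) (-bw) (-g1) (-g2) = 1 := by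
  rw [mon_mul, show au * -bu + av * -bv + aw * -bw - bu * -au - bv * -av - bw * -aw = 0 by ring]
  simp only [add_neg_cancel, mon_zero, zpow_zero, one_smul]

def monUnit (au av aw bu bv bw g1 g2 : ℤ) : Hˣ where
  val := X.mon au av aw bu bv bw g1 g2
  inv := X.mon (-au) (-av) (-aw) (-bu) (-bv) (-bw) (-g1) (-g2)
  val_inv := X.mon_mul_mon_neg ..
  inv_val := by simpa using X.mon_mul_mon_neg (-au) (-av) (-aw) (-bu) (-bv) (-bw) (-g1) (-g2)

theorem isUnit_mon (au av aw bu bv bw g1 g2 : ℤ) : IsUnit (X.mon au av aw bu bv bw g1 g2) :=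
  (X.monUnit ..).isUnit

theorem inverse_mon (au av aw bu bv bw g1 g2 : ℤ) :
    Ring.inverse (X.mon au av aw bu bv bw g1 g2) =
      X.mon (-au) (-av) (-aw) (-bu) (-bv) (-bw) (-g1) (-g2) :=
  Ring.inverse_unit (X.monUnit ..)

def e₁ : H := X.mon 0 0 1 0 0 (-1) 0 0 + X.mon 0 0 (-1) 0 0 (-1) 0 0

def e₂ : H :=
  X.mon 1 0 0 (-1) (-1) 1 0 0 + X.mon 0 1 (-1) 0 (-1) 0 0 0 + X.mon 0 (-1) 1 0 (-1) 0 0 0 +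
    X.mon (-1) 0 0 (-1) (-1) 1 0 0

def f₁ : H :=
  X.mon (-2) 1 (-1) 0 0 1 (-2) 0 + X.mon (-1) 0 0 1 0 0 (-2) 0 + X.mon 1 0 0 1 0 0 2 0 +
    X.mon 2 (-1) 1 0 0 1 2 0

def f₂ : H := X.mon 1 (-1) 0 0 1 0 0 (-2) + X.mon (-1) 1 0 0 1 0 0 2

def K₁ : H := X.mon (-2) 1 (-2) 0 0 0 (-2) 0

def K₂ : H := X.mon 1 (-2) 1 0 0 0 0 (-2)

theorem uqSl3Relations : UqSl3Relations (X.t ^ 2) X.e₁ X.e₂ X.f₁ X.f₂ X.K₁ X.K₂ := by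
  refine ⟨X.isUnit_mon .., X.isUnit_mon .., ?_⟩
  rw [K₁, K₂, inverse_mon, inverse_mon]
  -- Merging powers of `t ≠ 0` makes every coefficient a single `t ^ k`, so `module` never has
  -- to cancel `t * t⁻¹` (which `ring` cannot do).
  refine ⟨?_, ?_, ?_, ?_, ?_, ?_, ?_, ?_, ?_, ?_, ?_, ?_, ?_, ?_, ?_, ?_, ?_⟩ <;>
    simp only [e₁, e₂, f₁, f₂, pow_two, mul_add, add_mul, smul_add, smul_sub, add_smul, sub_smul,
      smul_mul_assoc, mul_smul_comm, smul_smul, mon_mul, ← zpow_natCast, ← zpow_neg, ← zpow_mul,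
      ← zpow_add₀ X.t_ne_zero, neg_neg, neg_zero, Int.reduceAdd, Int.reduceMul, Int.reduceNeg,
      Int.reduceSub, Nat.cast_ofNat] <;>
    module

end QuantumTorusGenerators

/-- positive representation of `U_q(sl₃)` in a quantum torus
algebra, reduced word `(1,2,1)`: the elements `e₁, e₂, f₁, f₂, K₁, K₂` of the
quantum torus algebra `H` defined below satisfy all defining relations of
`U_q(sl₃)` with rescaled generators; consequently `E_i ↦ e_i`, `F_i ↦ f_i`,
`K_i^{±1} ↦ K_i^{±1}` defines a `𝕜`-algebra homomorphism `U_q(sl₃) → H`. -/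
theorem positive_representation_Uq_sl3
    (t q : 𝕜) (ht : t ≠ 0) (hq : q = t ^ 2)
    (U V W Pu Pv Pw L1 L2 : Hˣ)
    -- the three `q`-commuting pairs
    (hUPu : (U : H) * Pu = q • ((Pu : H) * U))
    (hVPv : (V : H) * Pv = q • ((Pv : H) * V))
    (hWPw : (W : H) * Pw = q • ((Pw : H) * W))
    -- all other pairs of generators commute
    (hUV : Commute (U : H) (V : H)) (hUW : Commute (U : H) (W : H))
    (hUPv : Commute (U : H) (Pv : H)) (hUPw : Commute (U : H) (Pw : H))
    (hUL1 : Commute (U : H) (L1 : H)) (hUL2 : Commute (U : H) (L2 : H))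
    (hVW : Commute (V : H) (W : H)) (hVPu : Commute (V : H) (Pu : H))
    (hVPw : Commute (V : H) (Pw : H)) (hVL1 : Commute (V : H) (L1 : H))
    (hVL2 : Commute (V : H) (L2 : H)) (hWPu : Commute (W : H) (Pu : H))
    (hWPv : Commute (W : H) (Pv : H)) (hWL1 : Commute (W : H) (L1 : H))
    (hWL2 : Commute (W : H) (L2 : H)) (hPuPv : Commute (Pu : H) (Pv : H))
    (hPuPw : Commute (Pu : H) (Pw : H)) (hPuL1 : Commute (Pu : H) (L1 : H))
    (hPuL2 : Commute (Pu : H) (L2 : H)) (hPvPw : Commute (Pv : H) (Pw : H))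
    (hPvL1 : Commute (Pv : H) (L1 : H)) (hPvL2 : Commute (Pv : H) (L2 : H))
    (hPwL1 : Commute (Pw : H) (L1 : H)) (hPwL2 : Commute (Pw : H) (L2 : H))
    (hL1L2 : Commute (L1 : H) (L2 : H)) :
    ∀ e₁ e₂ f₁ f₂ K₁ K₂ : H,
      -- e₁ = e(w − 2p_w) + e(−w − 2p_w)
      e₁ = emon t U V W Pu Pv Pw L1 L2 0 0 1 0 0 (-1) 0 0
            + emon t U V W Pu Pv Pw L1 L2 0 0 (-1) 0 0 (-1) 0 0 →
      -- e₂ = e(u − 2p_u − 2p_v + 2p_w) + e(v − w − 2p_v) + e(−v + w − 2p_v)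
      --        + e(−u − 2p_u − 2p_v + 2p_w)
      e₂ = emon t U V W Pu Pv Pw L1 L2 1 0 0 (-1) (-1) 1 0 0
            + emon t U V W Pu Pv Pw L1 L2 0 1 (-1) 0 (-1) 0 0 0
            + emon t U V W Pu Pv Pw L1 L2 0 (-1) 1 0 (-1) 0 0 0
            + emon t U V W Pu Pv Pw L1 L2 (-1) 0 0 (-1) (-1) 1 0 0 →
      -- f₁ = e(−2u + v − w − 2λ₁ + 2p_w) + e(−u − 2λ₁ + 2p_u) + e(u + 2λ₁ + 2p_u)
      --        + e(2u − v + w + 2λ₁ + 2p_w)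
      f₁ = emon t U V W Pu Pv Pw L1 L2 (-2) 1 (-1) 0 0 1 (-2) 0
            + emon t U V W Pu Pv Pw L1 L2 (-1) 0 0 1 0 0 (-2) 0
            + emon t U V W Pu Pv Pw L1 L2 1 0 0 1 0 0 2 0
            + emon t U V W Pu Pv Pw L1 L2 2 (-1) 1 0 0 1 2 0 →
      -- f₂ = e(u − v − 2λ₂ + 2p_v) + e(−u + v + 2λ₂ + 2p_v)
      f₂ = emon t U V W Pu Pv Pw L1 L2 1 (-1) 0 0 1 0 0 (-2)
            + emon t U V W Pu Pv Pw L1 L2 (-1) 1 0 0 1 0 0 2 →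
      -- K₁ = e(−2u + v − 2w − 2λ₁),  K₂ = e(u − 2v + w − 2λ₂)
      K₁ = emon t U V W Pu Pv Pw L1 L2 (-2) 1 (-2) 0 0 0 (-2) 0 →
      K₂ = emon t U V W Pu Pv Pw L1 L2 1 (-2) 1 0 0 0 0 (-2) →
      -- K₁, K₂ are invertible and commute
      (IsUnit K₁ ∧ IsUnit K₂ ∧ K₁ * K₂ = K₂ * K₁ ∧
      -- K_i e_j = q^{a_ij} e_j K_i
      K₁ * e₁ = (q ^ 2) • (e₁ * K₁) ∧ K₁ * e₂ = q⁻¹ • (e₂ * K₁) ∧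
      K₂ * e₁ = q⁻¹ • (e₁ * K₂) ∧ K₂ * e₂ = (q ^ 2) • (e₂ * K₂) ∧
      -- K_i f_j = q^{−a_ij} f_j K_i
      K₁ * f₁ = ((q ^ 2)⁻¹) • (f₁ * K₁) ∧ K₁ * f₂ = q • (f₂ * K₁) ∧
      K₂ * f₁ = q • (f₁ * K₂) ∧ K₂ * f₂ = ((q ^ 2)⁻¹) • (f₂ * K₂) ∧
      -- e_i f_j = f_j e_i for i ≠ j
      e₁ * f₂ = f₂ * e₁ ∧ e₂ * f₁ = f₁ * e₂ ∧
      -- e_i f_i − f_i e_i = (q − q⁻¹)(K_i⁻¹ − K_i)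
      e₁ * f₁ - f₁ * e₁ = (q - q⁻¹) • (Ring.inverse K₁ - K₁) ∧
      e₂ * f₂ - f₂ * e₂ = (q - q⁻¹) • (Ring.inverse K₂ - K₂) ∧
      -- quantum Serre relations
      e₁ ^ 2 * e₂ - (q + q⁻¹) • (e₁ * e₂ * e₁) + e₂ * e₁ ^ 2 = 0 ∧
      e₂ ^ 2 * e₁ - (q + q⁻¹) • (e₂ * e₁ * e₂) + e₁ * e₂ ^ 2 = 0 ∧
      f₁ ^ 2 * f₂ - (q + q⁻¹) • (f₁ * f₂ * f₁) + f₂ * f₁ ^ 2 = 0 ∧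
      f₂ ^ 2 * f₁ - (q + q⁻¹) • (f₂ * f₁ * f₂) + f₁ * f₂ ^ 2 = 0) ∧
      -- consequently there is an algebra homomorphism U_q(sl₃) → H
      ∃ φ : UqSl3 𝕜 q →ₐ[𝕜] H,
        φ (UqSl3.gen 𝕜 q 0) = e₁ ∧ φ (UqSl3.gen 𝕜 q 1) = e₂ ∧
        φ (UqSl3.gen 𝕜 q 2) = f₁ ∧ φ (UqSl3.gen 𝕜 q 3) = f₂ ∧
        φ (UqSl3.gen 𝕜 q 4) = K₁ ∧ φ (UqSl3.gen 𝕜 q 5) = Ring.inverse K₁ ∧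
        φ (UqSl3.gen 𝕜 q 6) = K₂ ∧ φ (UqSl3.gen 𝕜 q 7) = Ring.inverse K₂ := by
  intro e₁ e₂ f₁ f₂ K₁ K₂ he₁ he₂ hf₁ hf₂ hK₁ hK₂
  subst hq he₁ he₂ hf₁ hf₂ hK₁ hK₂
  let X : QuantumTorusGenerators 𝕜 H :=
    ⟨t, U, V, W, Pu, Pv, Pw, L1, L2, ht, hUPu, hVPv, hWPw, hUV, hUW, hUPv, hUPw, hUL1, hUL2, hVW,
      hVPu, hVPw, hVL1, hVL2, hWPu, hWPv, hWL1, hWL2, hPuPv, hPuPw, hPuL1, hPuL2, hPvPw, hPvL1,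
      hPvL2, hPwL1, hPwL2, hL1L2⟩
  exact ⟨X.uqSl3Relations, X.uqSl3Relations.exists_algHom⟩
end
end
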